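/- arXiv:2010.08192 — 6 statements merged into one kernel-verified Lean document; each statement's English description precedes it below -/
import Mathlib

section
/- The n-dimensional Euclidean space ℓ_2^n (n ≥ 2) embeds linearly isometrically into ℓ_p whenever p is a positive even integer. -/
open scoped RealInnerProductSpace
open MeasureTheory Metric Set

/-!
The map `u ↦ u^{⊗d}` linearizes `d`-th powers of inner products:
`⟪x^{⊗d}, u^{⊗d}⟫ = ⟪x, u⟫ ^ d`. Its average over the unit ball lies in the convex hull of the
compact set `{u^{⊗d} : ‖u‖ ≤ 1}` of a finite-dimensional space, so by Carathéodory it is a finite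
convex combination `∑ wⱼ vⱼ^{⊗d}`. Pairing with `x^{⊗d}` gives `∑ wⱼ ⟪vⱼ, x⟫ ^ d = ⨍ ⟪x, u⟫ ^ d`,
which by rotation invariance of the ball equals `c ‖x‖ ^ d`, with `c > 0` when `d` is even.
Rescaling the `vⱼ` gives `∑ ⟪vⱼ, x⟫ ^ d = ‖x‖ ^ d`, so `x ↦ (⟪vⱼ, x⟫)ⱼ` is the embedding.
-/

theorem convexHull_eq_biUnion_image_stdSimplex {V : Type*} [AddCommGroup V] [Module ℝ V]
    [FiniteDimensional ℝ V] (s : Set V) :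
    convexHull ℝ s = ⋃ m ≤ Module.finrank ℝ V + 1,
      (fun p : (Fin m → ℝ) × (Fin m → V) => ∑ i, p.1 i • p.2 i) ''
        (stdSimplex ℝ (Fin m) ×ˢ univ.pi fun _ => s) := by
  refine Subset.antisymm (fun x hx => ?_) ?_
  · obtain ⟨κ, _, z, w, hzs, hz, hw0, hw1, rfl⟩ := eq_pos_convex_span_of_mem_convexHull hx
    have hcard : Fintype.card κ ≤ Module.finrank ℝ V + 1 :=
      hz.card_le_finrank_succ.trans (Nat.add_le_add_right (Submodule.finrank_le _) 1)
    set e := (Fintype.equivFin κ).symm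
    refine mem_biUnion hcard ⟨(w ∘ e, z ∘ e), ⟨⟨fun i => (hw0 _).le, ?_⟩,
      fun i _ => hzs (mem_range_self _)⟩, e.sum_comp fun i => w i • z i⟩
    simpa only [Function.comp_apply, e.sum_comp] using hw1
  · simp only [iUnion_subset_iff, image_subset_iff]
    rintro m - ⟨w, z⟩ ⟨⟨hw0, hw1⟩, hz⟩
    exact (convex_convexHull ℝ s).sum_mem (fun i _ => hw0 i) hw1
      fun i _ => subset_convexHull ℝ s (hz i (mem_univ i))

theorem IsCompact.convexHull {V : Type*} [NormedAddCommGroup V] [NormedSpace ℝ V]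
    [FiniteDimensional ℝ V] {s : Set V} (hs : IsCompact s) : IsCompact (convexHull ℝ s) := by
  rw [convexHull_eq_biUnion_image_stdSimplex]
  exact (finite_le_nat _).isCompact_biUnion fun m _ =>
    ((isCompact_stdSimplex (𝕜 := ℝ) (ι := Fin m)).prod (isCompact_univ_pi fun _ => hs)).image
      (by fun_prop)

section BallMoment

variable {F : Type*} [NormedAddCommGroup F] [InnerProductSpace ℝ F] [FiniteDimensional ℝ F]
  [MeasurableSpace F] [BorelSpace F]

theorem LinearIsometryEquiv.setAverage_closedBall_comp {G : Type*} [NormedAddCommGroup G]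
    [NormedSpace ℝ G] (R : F ≃ₗᵢ[ℝ] F) (g : F → G) (r : ℝ) :
    ⨍ u in closedBall 0 r, g (R u) = ⨍ u in closedBall 0 r, g u := by
  have h := R.measurePreserving.setIntegral_preimage_emb R.toHomeomorph.measurableEmbedding g
    (closedBall 0 r)
  rw [R.preimage_closedBall, map_zero] at h
  rw [setAverage_eq, setAverage_eq, h]

noncomputable def ballMoment (d : ℕ) (x : F) : ℝ := ⨍ u in closedBall (0 : F) 1, ⟪x, u⟫ ^ d

theorem ballMoment_smul (d : ℕ) (c : ℝ) (x : F) :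
    ballMoment d (c • x) = c ^ d * ballMoment d x := by
  simp only [ballMoment, setAverage_eq, inner_smul_left, mul_pow, integral_const_mul, smul_eq_mul,
    conj_trivial]
  ring

theorem ballMoment_eq_of_norm_eq (d : ℕ) {x y : F} (h : ‖x‖ = ‖y‖) :
    ballMoment d x = ballMoment d y := by
  set R := (ℝ ∙ (x - y))ᗮ.reflection
  have hR : ∀ u, ⟪y, u⟫ = ⟪x, R u⟫ := fun u => by
    rw [← Submodule.reflection_sub h, ← R.inner_map_map, Submodule.reflection_reflection]
  simp only [ballMoment, hR]
  exact (R.setAverage_closedBall_comp (fun u => ⟪x, u⟫ ^ d) 1).symm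

theorem ballMoment_eq_norm_pow_mul (d : ℕ) (x : F) {e : F} (he : ‖e‖ = 1) :
    ballMoment d x = ‖x‖ ^ d * ballMoment d e := by
  rw [ballMoment_eq_of_norm_eq d (y := ‖x‖ • e) (by simp [norm_smul, he]), ballMoment_smul]

theorem ballMoment_pos {d : ℕ} (hd : Even d) {x : F} (hx : x ≠ 0) : 0 < ballMoment d x := by
  have hB : 0 < volume.real (closedBall (0 : F) 1) :=
    ENNReal.toReal_pos (measure_closedBall_pos volume 0 one_pos).ne' measure_closedBall_lt_top.ne
  rw [ballMoment, setAverage_eq, smul_eq_mul]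
  refine mul_pos (inv_pos.mpr hB) ?_
  rw [setIntegral_pos_iff_support_of_nonneg_ae (ae_of_all _ fun u => hd.pow_nonneg _)
    ((by fun_prop : Continuous fun u => ⟪x, u⟫ ^ d).continuousOn.integrableOn_compact
      (isCompact_closedBall 0 1))]
  have hU : IsOpen ({u | ⟪x, u⟫ ≠ 0} ∩ ball 0 1) :=
    (isOpen_ne_fun (by fun_prop) continuous_const).inter isOpen_ball
  refine (hU.measure_pos volume ⟨(2 * ‖x‖)⁻¹ • x, ?_, ?_⟩).trans_le (measure_mono ?_)
  · simp [inner_smul_right, hx]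
  · have : ‖x‖ ≠ 0 := norm_ne_zero_iff.mpr hx
    norm_num [norm_smul, mul_right_comm _ _ ‖x‖, this]
  · exact fun u ⟨hu, hu1⟩ => ⟨pow_ne_zero d hu, ball_subset_closedBall hu1⟩

end BallMoment

namespace EuclideanSpace

noncomputable def tensorPower {ι : Type*} (d : ℕ) (u : EuclideanSpace ℝ ι) :
    EuclideanSpace ℝ (Fin d → ι) :=
  WithLp.toLp 2 fun i => ∏ j, u (i j)

theorem continuous_tensorPower {ι : Type*} (d : ℕ) : Continuous (tensorPower (ι := ι) d) := by
  unfold tensorPower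
  fun_prop

variable {ι : Type*} [Fintype ι]

theorem inner_tensorPower (d : ℕ) (x u : EuclideanSpace ℝ ι) :
    ⟪tensorPower d x, tensorPower d u⟫ = ⟪x, u⟫ ^ d := by
  simp only [tensorPower, PiLp.inner_apply, RCLike.inner_apply, conj_trivial,
    ← Finset.prod_mul_distrib]
  rw [← Fintype.prod_sum (fun (_ : Fin d) l => u l * x l), Finset.prod_const, Finset.card_univ,
    Fintype.card_fin]

theorem inner_tensorPower_setAverage (d : ℕ) (x : EuclideanSpace ℝ ι) :
    ⟪tensorPower d x, ⨍ u in closedBall 0 1, tensorPower d u⟫ = ballMoment d x := by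
  rw [ballMoment, setAverage_eq, setAverage_eq, inner_smul_right, ← integral_inner
    ((continuous_tensorPower d).continuousOn.integrableOn_compact (isCompact_closedBall 0 1))]
  simp only [inner_tensorPower, smul_eq_mul]

theorem exists_weighted_sum_inner_pow_eq_norm_pow [Nonempty ι] {d : ℕ} (hd : Even d) :
    ∃ (N : ℕ) (w : Fin N → ℝ) (v : Fin N → EuclideanSpace ℝ ι), (∀ j, 0 ≤ w j) ∧
      ∀ x, ∑ j, w j * ⟪v j, x⟫ ^ d = ‖x‖ ^ d := by
  set B := closedBall (0 : EuclideanSpace ℝ ι) 1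
  have hK : IsCompact (tensorPower d '' B) :=
    (isCompact_closedBall 0 1).image (continuous_tensorPower d)
  have havg : ⨍ u in B, tensorPower d u ∈ convexHull ℝ (tensorPower d '' B) :=
    (convex_convexHull ℝ _).set_average_mem hK.convexHull.isClosed
      (measure_closedBall_pos volume 0 one_pos).ne' measure_closedBall_lt_top.ne
      ((ae_restrict_mem measurableSet_closedBall).mono fun u hu =>
        subset_convexHull ℝ _ (Set.mem_image_of_mem _ hu))
      ((continuous_tensorPower d).continuousOn.integrableOn_compact (isCompact_closedBall 0 1))
  rw [convexHull_eq_biUnion_image_stdSimplex] at havg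
  obtain ⟨N, -, ⟨w, z⟩, ⟨⟨hw0, -⟩, hz⟩, hwz⟩ := Set.mem_iUnion₂.mp havg
  dsimp only at hwz hz hw0
  choose v hv using fun j => (hz j (mem_univ j)).imp fun _ => And.right
  obtain ⟨e, he⟩ := exists_norm_eq (EuclideanSpace ℝ ι) zero_le_one
  have hc : 0 < ballMoment d e := ballMoment_pos hd (norm_ne_zero_iff.mp (by simp [he]))
  refine ⟨N, fun j => w j / ballMoment d e, v, fun j => div_nonneg (hw0 j) hc.le, fun x => ?_⟩
  have key : ∑ j, w j * ⟪v j, x⟫ ^ d = ‖x‖ ^ d * ballMoment d e := by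
    rw [← ballMoment_eq_norm_pow_mul d x he, ← inner_tensorPower_setAverage, ← hwz]
    simp only [inner_sum, inner_smul_right, ← hv, inner_tensorPower, real_inner_comm]
  simp_rw [div_mul_eq_mul_div, ← Finset.sum_div, key]
  field_simp

theorem exists_sum_inner_pow_eq_norm_pow [Nonempty ι] {d : ℕ} (hd : Even d) (hd0 : d ≠ 0) :
    ∃ (N : ℕ) (v : Fin N → EuclideanSpace ℝ ι), ∀ x, ∑ j, ⟪v j, x⟫ ^ d = ‖x‖ ^ d := by
  obtain ⟨N, w, v, hw0, hwv⟩ := exists_weighted_sum_inner_pow_eq_norm_pow (ι := ι) hd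
  refine ⟨N, fun j => w j ^ (d⁻¹ : ℝ) • v j, fun x => ?_⟩
  simp only [inner_smul_left, conj_trivial, mul_pow, Real.rpow_inv_natCast_pow (hw0 _) hd0, hwv]

theorem exists_hasSum_inner_pow_eq_norm_pow {d : ℕ} (hd : Even d) (hd0 : d ≠ 0) :
    ∃ v : ℕ → EuclideanSpace ℝ ι, ∀ x, HasSum (fun j => ⟪v j, x⟫ ^ d) (‖x‖ ^ d) := by
  rcases isEmpty_or_nonempty ι with hι | hι
  · refine ⟨0, fun x => ?_⟩
    simp [Subsingleton.elim x 0, zero_pow hd0, hasSum_zero]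
  obtain ⟨N, v, hv⟩ := exists_sum_inner_pow_eq_norm_pow (ι := ι) hd hd0
  refine ⟨Function.extend Fin.val v 0, fun x => ?_⟩
  have hzero : ∀ j ∉ range Fin.val, ⟪Function.extend Fin.val v 0 j, x⟫ ^ d = 0 := fun j hj => by
    rw [Function.extend_apply' _ _ _ hj, Pi.zero_apply, inner_zero_left, zero_pow hd0]
  rw [← Fin.val_injective.hasSum_iff hzero]
  convert hasSum_fintype fun j => ⟪v j, x⟫ ^ d using 1
  · ext j
    simp [Fin.val_injective.extend_apply]
  · exact (hv x).symm

end EuclideanSpace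

theorem euclidean_embeds_lp_of_even_general
    (n : ℕ) (p : ℝ) (hp : ∃ k : ℕ, 0 < k ∧ p = 2 * k) :
    ∃ T : EuclideanSpace ℝ (Fin n) →ₗ[ℝ] (ℕ → ℝ),
      ∀ x : EuclideanSpace ℝ (Fin n),
        Summable (fun j => |T x j| ^ p) ∧ ∑' j, |T x j| ^ p = ‖x‖ ^ p := by
  obtain ⟨k, hk, rfl⟩ := hp
  have hd : Even (2 * k) := even_two_mul k
  obtain ⟨v, hv⟩ := EuclideanSpace.exists_hasSum_inner_pow_eq_norm_pow (ι := Fin n) hd (by omega)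
  have hpow : ∀ a : ℝ, a ^ ((2 : ℝ) * k) = a ^ (2 * k) := fun a => by
    rw [← Real.rpow_natCast]
    push_cast
    rfl
  refine ⟨LinearMap.pi fun j => innerₗ _ (v j), fun x => ?_⟩
  simp only [LinearMap.pi_apply, innerₗ_apply_apply, hpow, hd.pow_abs]
  exact ⟨(hv x).summable, (hv x).tsum_eq⟩

/-- `ℓ_2^n` (`n ≥ 2`) embeds linearly isometrically into `ℓ_p` whenever `p`
is a positive even integer. -/
theorem euclidean_embeds_lp_of_even
    (n : ℕ) (hn : 2 ≤ n) (p : ℝ) (hp : ∃ k : ℕ, 0 < k ∧ p = 2 * k) :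
    ∃ T : EuclideanSpace ℝ (Fin n) →ₗ[ℝ] (ℕ → ℝ),
      ∀ x : EuclideanSpace ℝ (Fin n),
        Summable (fun j => |T x j| ^ p) ∧ ∑' j, |T x j| ^ p = ‖x‖ ^ p :=
  euclidean_embeds_lp_of_even_general n p hp
end

section
/- Let ‖·‖ be a norm on ℝ² such that the function G(θ) = ‖(cos θ, sin θ)‖ is of class C² on [0, 2π]. Then (ℝ², ‖·‖) does not embed linearly isometrically into ℓ_1. -/
/-!
Write `a = T (1, 0)` and `b = T (0, 1)`, so that on the unit circle the norm is
`G θ = ∑ |cos θ * a i + sin θ * b i|`. Each summand `u` satisfies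
`u (θ + h) + u (θ - h) = 2 cos h * u θ`, hence `G (θ + h) + G (θ - h) ≥ 2 cos h * G θ`; at a zero
`θ` of a nonzero summand `u_j` this improves by `2 |u_j' θ| sin h`. If `G` were differentiable at
`θ`, the left side would have derivative `0` in `h` at `h = 0`, whereas the lower bound has
derivative `2 |u_j' θ| > 0`: every summand leaves a corner in `G`.
-/

open Real Filter Topology

lemma cos_add_mul_add_sin_add_mul (a b θ h : ℝ) :
    cos (θ + h) * a + sin (θ + h) * b =
      cos h * (cos θ * a + sin θ * b) + sin h * (cos θ * b - sin θ * a) := by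
  rw [cos_add, sin_add]; ring

lemma cos_sub_mul_add_sin_sub_mul (a b θ h : ℝ) :
    cos (θ - h) * a + sin (θ - h) * b =
      cos h * (cos θ * a + sin θ * b) - sin h * (cos θ * b - sin θ * a) := by
  rw [cos_sub, sin_sub]; ring

lemma sq_cos_mul_add_sin_mul_add_sq (a b θ : ℝ) :
    (cos θ * a + sin θ * b) ^ 2 + (cos θ * b - sin θ * a) ^ 2 = a ^ 2 + b ^ 2 := by
  linear_combination (a ^ 2 + b ^ 2) * sin_sq_add_cos_sq θ

lemma two_mul_cos_mul_abs_cos_mul_add_sin_mul_le (a b θ : ℝ) {h : ℝ} (hh : 0 ≤ cos h) :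
    2 * cos h * |cos θ * a + sin θ * b| ≤
      |cos (θ + h) * a + sin (θ + h) * b| + |cos (θ - h) * a + sin (θ - h) * b| := by
  calc 2 * cos h * |cos θ * a + sin θ * b|
      = |(cos (θ + h) * a + sin (θ + h) * b) + (cos (θ - h) * a + sin (θ - h) * b)| := by
        rw [cos_add_mul_add_sin_add_mul, cos_sub_mul_add_sin_sub_mul, add_add_sub_cancel,
          ← two_mul, ← mul_assoc, abs_mul, abs_of_nonneg (by linarith : 0 ≤ 2 * cos h)]
    _ ≤ _ := abs_add_le _ _

lemma exists_cos_mul_add_sin_mul_eq_zero (a b : ℝ) : ∃ θ, cos θ * a + sin θ * b = 0 := by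
  -- the function takes the values `a` at `0` and `-a` at `π`
  have hcont : ContinuousOn (fun θ => cos θ * a + sin θ * b) (Set.uIcc 0 π) := by fun_prop
  have hmem : (0 : ℝ) ∈ Set.uIcc a (-a) := by
    rcases le_total a 0 with ha | ha
    · exact Set.mem_uIcc.2 (Or.inl ⟨ha, by linarith⟩)
    · exact Set.mem_uIcc.2 (Or.inr ⟨by linarith, ha⟩)
  obtain ⟨θ, -, hθ⟩ := intermediate_value_uIcc hcont (by simpa using hmem)
  exact ⟨θ, hθ⟩

lemma HasDerivAt.le_of_eventually_le_nhdsGT {f g : ℝ → ℝ} {f' g' x : ℝ}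
    (hf : HasDerivAt f f' x) (hg : HasDerivAt g g' x) (hfg : f x = g x)
    (hle : ∀ᶠ y in 𝓝[>] x, f y ≤ g y) : f' ≤ g' := by
  have hslope {φ : ℝ → ℝ} {φ' : ℝ} (hφ : HasDerivAt φ φ' x) :
      Tendsto (slope φ x) (𝓝[>] x) (𝓝 φ') :=
    (hasDerivAt_iff_tendsto_slope.1 hφ).mono_left (nhdsWithin_mono _ fun _ hy => ne_of_gt hy)
  refine le_of_tendsto_of_tendsto (hslope hf) (hslope hg) ?_
  filter_upwards [hle, self_mem_nhdsWithin] with y hy hxy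
  rw [slope_def_field, slope_def_field, hfg]
  exact div_le_div_of_nonneg_right (by linarith) (sub_nonneg.2 (le_of_lt hxy))

noncomputable def circleL1Norm {ι : Type*} (a b : ι → ℝ) (θ : ℝ) : ℝ :=
  ∑' i, |cos θ * a i + sin θ * b i|

section circleL1Norm

variable {ι : Type*} {a b : ι → ℝ}

lemma two_mul_cos_mul_circleL1Norm_add_le
    (hs : ∀ θ, Summable fun i => |cos θ * a i + sin θ * b i|) {θ : ℝ} {j : ι}
    (hj : cos θ * a j + sin θ * b j = 0) {h : ℝ} (hcos : 0 ≤ cos h) (hsin : 0 ≤ sin h) :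
    2 * cos h * circleL1Norm a b θ + 2 * |cos θ * b j - sin θ * a j| * sin h ≤
      circleL1Norm a b (θ + h) + circleL1Norm a b (θ - h) := by
  classical
  refine hasSum_le (fun i => ?_)
    (((hs θ).hasSum.mul_left (2 * cos h)).add (hasSum_ite_eq j _))
    ((hs (θ + h)).hasSum.add (hs (θ - h)).hasSum)
  by_cases hij : i = j
  · subst hij
    rw [if_pos rfl, hj, abs_zero, mul_zero, zero_add, cos_add_mul_add_sin_add_mul,
      cos_sub_mul_add_sin_sub_mul, hj, mul_zero, zero_add, zero_sub, abs_neg, abs_mul,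
      abs_of_nonneg hsin]
    linarith
  · rw [if_neg hij, add_zero]
    exact two_mul_cos_mul_abs_cos_mul_add_sin_mul_le _ _ _ hcos

theorem not_differentiable_circleL1Norm
    (hs : ∀ θ, Summable fun i => |cos θ * a i + sin θ * b i|) {j : ι} (hj : (a j, b j) ≠ 0) :
    ¬ Differentiable ℝ (circleL1Norm a b) := by
  intro hG
  obtain ⟨θ, hθ⟩ := exists_cos_mul_add_sin_mul_eq_zero (a j) (b j)
  -- `c = |u' θ|` for the summand `u θ = cos θ * a j + sin θ * b j`
  set c := |cos θ * b j - sin θ * a j|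
  have hc : 0 < c := by
    refine abs_pos.2 fun hw => hj ?_
    have := sq_cos_mul_add_sin_mul_add_sq (a j) (b j) θ
    rw [hθ, hw] at this
    ext <;> simp <;> nlinarith [sq_nonneg (a j), sq_nonneg (b j)]
  have hsym : HasDerivAt (fun h => circleL1Norm a b (θ + h) + circleL1Norm a b (θ - h)) 0 0 := by
    have hG' := (hG θ).hasDerivAt
    exact ((HasDerivAt.comp_const_add θ 0 (by rwa [add_zero])).fun_add
      (HasDerivAt.comp_const_sub θ 0 (by rwa [sub_zero] : HasDerivAt _ _ (θ - 0)))).congr_deriv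
      (add_neg_cancel _)
  have hlow : HasDerivAt (fun h => 2 * cos h * circleL1Norm a b θ + 2 * c * sin h) (2 * c) 0 := by
    simpa using (((hasDerivAt_cos 0).const_mul 2).mul_const (circleL1Norm a b θ)).fun_add
      ((hasDerivAt_sin 0).const_mul (2 * c))
  have := hlow.le_of_eventually_le_nhdsGT hsym (by simp; ring) <| by
    filter_upwards [Ioo_mem_nhdsGT pi_div_two_pos] with h hh
    exact two_mul_cos_mul_circleL1Norm_add_le hs hθ
      (cos_nonneg_of_mem_Icc ⟨by linarith [hh.1, pi_pos], hh.2.le⟩)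
      (sin_nonneg_of_nonneg_of_le_pi hh.1.le (by linarith [hh.2, pi_pos]))
  linarith

end circleL1Norm

theorem smooth_two_dim_norm_not_embeds_l1_general
    (N : ℝ × ℝ → ℝ)
    (hN0 : ∀ x, N x = 0 ↔ x = 0)
    (hG : ContDiff ℝ 2 (fun θ : ℝ => N (Real.cos θ, Real.sin θ))) :
    ¬ ∃ T : (ℝ × ℝ) →ₗ[ℝ] (ℕ → ℝ),
      ∀ x : ℝ × ℝ,
        Summable (fun j => |T x j|) ∧ ∑' j, |T x j| = N x := by
  rintro ⟨T, hT⟩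
  have hT_circle (θ : ℝ) (i : ℕ) :
      T (cos θ, sin θ) i = cos θ * T (1, 0) i + sin θ * T (0, 1) i := by
    have : ((cos θ, sin θ) : ℝ × ℝ) = cos θ • (1, 0) + sin θ • (0, 1) := by ext <;> simp
    rw [this, map_add, map_smul, map_smul]; rfl
  have hs (θ : ℝ) : Summable fun i => |cos θ * T (1, 0) i + sin θ * T (0, 1) i| := by
    simpa only [hT_circle] using (hT (cos θ, sin θ)).1
  have hGeq : (fun θ => N (cos θ, sin θ)) = circleL1Norm (T (1, 0)) (T (0, 1)) := by
    ext θ; simp only [circleL1Norm, ← hT_circle, (hT _).2]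
  obtain ⟨j, hj⟩ : ∃ j, T (1, 0) j ≠ 0 := by
    by_contra! h
    have : N (1, 0) = 0 := by rw [← (hT (1, 0)).2]; simp [h]
    simpa using (hN0 _).1 this
  exact not_differentiable_circleL1Norm hs (j := j) (by simp [hj])
    (hGeq ▸ hG.differentiable (by norm_num))

/-- If `‖·‖` is a norm on `ℝ²` such that `G(θ) = ‖(cos θ, sin θ)‖` is `C²`,
then `(ℝ², ‖·‖)` does not embed linearly isometrically into `ℓ_1`. -/
theorem smooth_two_dim_norm_not_embeds_l1
    (N : ℝ × ℝ → ℝ)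
    (hN0 : ∀ x, N x = 0 ↔ x = 0)
    (hNsmul : ∀ (c : ℝ) x, N (c • x) = |c| * N x)
    (hNtri : ∀ x y, N (x + y) ≤ N x + N y)
    (hG : ContDiff ℝ 2 (fun θ : ℝ => N (Real.cos θ, Real.sin θ))) :
    ¬ ∃ T : (ℝ × ℝ) →ₗ[ℝ] (ℕ → ℝ),
      ∀ x : ℝ × ℝ,
        Summable (fun j => |T x j|) ∧ ∑' j, |T x j| = N x :=
  smooth_two_dim_norm_not_embeds_l1_general N hN0 hG
end

section
/- Let ‖·‖ be a norm on ℝ² and set G(θ) = ‖(cos θ, sin θ)‖. If G is of class C², then for every φ, G(φ) = (1/4) ∫_0^{2π} |cos(φ − θ)| [G(θ − π/2) + G''(θ − π/2)] dθ. -/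
/-!
Integrating by parts twice, `∫_φ^{φ+π} sin (u - φ) (G u + G'' u) du = G φ + G (φ + π)`, and this is
`2 G φ` because `G` is `π`-periodic (a norm is even). On `[φ, φ + π]` the sine is nonnegative, and
after the shift `u = θ - π/2` the integrand of the theorem is `π`-periodic, so its integral over
`[0, 2π]` is twice the integral over `[φ, φ + π]`.
-/

open Real

theorem Function.Periodic.deriv {𝕜 F : Type*} [NontriviallyNormedField 𝕜] [NormedAddCommGroup F]
    [NormedSpace 𝕜 F] {f : 𝕜 → F} {c : 𝕜} (hf : Function.Periodic f c) :
    Function.Periodic (deriv f) c := fun x => by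
  rw [← deriv_comp_add_const, hf.funext]

theorem Function.Periodic.intervalIntegral_add_two_mul {E : Type*} [NormedAddCommGroup E]
    [NormedSpace ℝ E] {f : ℝ → E} {T : ℝ} (hf : Function.Periodic f T)
    (h_int : ∀ t₁ t₂, IntervalIntegrable f MeasureTheory.volume t₁ t₂) (t s : ℝ) :
    ∫ x in t..t + 2 * T, f x = (2 : ℝ) • ∫ x in s..s + T, f x := by
  have h := hf.intervalIntegral_add_zsmul_eq 2 t h_int
  rw [two_zsmul, ← two_mul, two_zsmul, ← two_smul ℝ] at h
  rw [h, hf.intervalIntegral_add_eq t s]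

theorem periodic_pi_of_map_neg {N : ℝ × ℝ → ℝ} (hN : ∀ x, N (-x) = N x) :
    Function.Periodic (fun θ => N (cos θ, sin θ)) π := fun θ => by
  simpa [cos_add_pi, sin_add_pi] using hN (cos θ, sin θ)

theorem integral_sin_sub_mul_add_deriv_deriv {G : ℝ → ℝ} (hG : ContDiff ℝ 2 G) (φ : ℝ) :
    ∫ u in φ..φ + π, sin (u - φ) * (G u + deriv (deriv G) u) = G φ + G (φ + π) := by
  have hG' : Differentiable ℝ (deriv G) := hG.differentiable_deriv_two
  have hF : ∀ u, HasDerivAt (fun u => sin (u - φ) * deriv G u - cos (u - φ) * G u)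
      (sin (u - φ) * (G u + deriv (deriv G) u)) u := fun u => by
    have hs : HasDerivAt (fun u => sin (u - φ)) (cos (u - φ)) u := by
      simpa using ((hasDerivAt_id u).sub_const φ).sin
    have hc : HasDerivAt (fun u => cos (u - φ)) (-sin (u - φ)) u := by
      simpa using ((hasDerivAt_id u).sub_const φ).cos
    exact ((hs.mul (hG' u).hasDerivAt).sub
      (hc.mul ((hG.differentiable two_ne_zero) u).hasDerivAt)).congr_deriv (by ring)
  have h_cont : Continuous fun u => sin (u - φ) * (G u + deriv (deriv G) u) := by
    fun_prop
  rw [intervalIntegral.integral_eq_sub_of_hasDerivAt (fun u _ => hF u)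
    (h_cont.intervalIntegrable _ _)]
  simp only [add_sub_cancel_left, sub_self, sin_pi, cos_pi, sin_zero, cos_zero]
  ring

theorem integral_abs_sin_sub_mul (H : ℝ → ℝ) (φ : ℝ) :
    ∫ u in φ..φ + π, |sin (u - φ)| * H u = ∫ u in φ..φ + π, sin (u - φ) * H u := by
  refine intervalIntegral.integral_congr fun u hu => ?_
  rw [Set.uIcc_of_le (by linarith [pi_pos])] at hu
  rw [abs_of_nonneg (sin_nonneg_of_nonneg_of_le_pi (by linarith [hu.1]) (by linarith [hu.2]))]

theorem levy_one_representation_formula_general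
    (N : ℝ × ℝ → ℝ)
    (hNsmul : ∀ (c : ℝ) x, N (c • x) = |c| * N x)
    (G : ℝ → ℝ) (hGdef : ∀ θ, G θ = N (Real.cos θ, Real.sin θ))
    (hG : ContDiff ℝ 2 G) :
    ∀ φ : ℝ, G φ = (1 / 4) *
      ∫ θ in (0 : ℝ)..(2 * π),
        |Real.cos (φ - θ)| * (G (θ - π / 2) + deriv (deriv G) (θ - π / 2)) := by
  intro φ
  set K : ℝ → ℝ := fun u => |sin (u - φ)| * (G u + deriv (deriv G) u)
  have hG_per : Function.Periodic G π := by
    rw [funext hGdef]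
    exact periodic_pi_of_map_neg fun x => by simpa using hNsmul (-1) x
  have hK_per : Function.Periodic K π := fun u => by
    simp only [K, add_sub_right_comm u π φ, sin_add_pi, abs_neg, hG_per u, hG_per.deriv.deriv u]
  have hK_cont : Continuous K := by
    fun_prop
  have h_integrand (θ : ℝ) :
      |cos (φ - θ)| * (G (θ - π / 2) + deriv (deriv G) (θ - π / 2)) = K (θ - π / 2) := by
    rw [show K (θ - π / 2) = |sin (θ - φ - π / 2)| * _ by rw [sub_right_comm], sin_sub_pi_div_two,
      abs_neg, ← cos_neg, neg_sub]
  have h_int : ∫ θ in (0 : ℝ)..(2 * π), K (θ - π / 2) = 4 * G φ := by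
    rw [intervalIntegral.integral_comp_sub_right, zero_sub,
      show 2 * π - π / 2 = -(π / 2) + 2 * π by ring,
      hK_per.intervalIntegral_add_two_mul (fun _ _ => hK_cont.intervalIntegrable _ _) _ φ,
      integral_abs_sin_sub_mul, integral_sin_sub_mul_add_deriv_deriv hG, hG_per φ, smul_eq_mul]
    ring
  simp only [h_integrand, h_int]
  ring

/-- If `‖·‖` is a norm on `ℝ²` and `G(θ) = ‖(cos θ, sin θ)‖` is `C²`, then for
every `φ`, `G(φ) = (1/4) ∫_0^{2π} |cos(φ-θ)| (G(θ-π/2) + G''(θ-π/2)) dθ`. -/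
theorem levy_one_representation_formula
    (N : ℝ × ℝ → ℝ)
    (hN0 : ∀ x, N x = 0 ↔ x = 0)
    (hNsmul : ∀ (c : ℝ) x, N (c • x) = |c| * N x)
    (hNtri : ∀ x y, N (x + y) ≤ N x + N y)
    (G : ℝ → ℝ) (hGdef : ∀ θ, G θ = N (Real.cos θ, Real.sin θ))
    (hG : ContDiff ℝ 2 G) :
    ∀ φ : ℝ, G φ = (1 / 4) *
      ∫ θ in (0 : ℝ)..(2 * π),
        |Real.cos (φ - θ)| * (G (θ - π / 2) + deriv (deriv G) (θ - π / 2)) :=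
  levy_one_representation_formula_general N hNsmul G hGdef hG
end

section
/- Fix 1 ≤ p < q < 2 and n ≥ 2. The norm of ℓ_q^n admits the integral representation ‖x‖_q^p = c · ∫_{ℝⁿ} |⟨x, ξ⟩|^p dμ_q(ξ) for all x ∈ ℝⁿ, where μ_q is the standard n-dimensional symmetric q-stable measure (whose density is the Fourier transform of exp(−‖x‖_q^q)) and c⁻¹ = ∫_ℝ |t|^p dν_q(t) with ν_q the standard one-dimensional symmetric q-stable measure; in particular, ∫_ℝ |t|^p dν_q(t) < ∞. -/
/-!
Scaling `t ↦ |a| t` shows that `∫₀^∞ (1 - cos (a t)) t^(-1-p) dt = K_p |a|^p` for every real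
`a`, where `K_p = ∫₀^∞ (1 - cos t) t^(-1-p) dt` is finite and positive when `0 < p < 2`. Taking
`a = Y` for a random variable `Y` and integrating (Tonelli) expresses `𝔼|Y|^p` through
`𝔼 cos (t Y)`. If `𝔼 cos (s Y) = exp (-A s^q)`, the substitution `t ↦ A^(1/q) t` gives
`𝔼|Y|^p = A^(p/q) 𝔼|Z|^p` with `Z ∼ ν_q`; the last moment is finite because
`1 - exp (-t^q) ≤ t^q` and `p < q`. Finally, for `ξ ∼ μ_q` the projection `⟨x, ξ⟩` has
characteristic function `exp (-‖x‖_q^q |s|^q)`, so `A = ‖x‖_q^q`.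
-/

open scoped BigOperators
open Real MeasureTheory Complex
open Set
open scoped ENNReal

noncomputable def kernelIntegral (p : ℝ) (h : ℝ → ℝ) : ℝ≥0∞ :=
  ∫⁻ t in Ioi 0, ENNReal.ofReal (h t / t ^ (1 + p))

theorem lintegral_Ioi_comp_mul_left {f : ℝ → ℝ≥0∞} (hf : Measurable f) {c : ℝ} (hc : 0 < c) :
    ∫⁻ t in Ioi 0, f (c * t) = ENNReal.ofReal c⁻¹ * ∫⁻ t in Ioi 0, f t := by
  have hpre : (c * ·) ⁻¹' Ioi (0 : ℝ) = Ioi 0 := by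
    ext t; simp [mul_pos_iff_of_pos_left hc]
  rw [← hpre, ← setLIntegral_map measurableSet_Ioi hf (measurable_const_mul c),
    Real.map_volume_mul_left hc.ne', abs_of_pos (inv_pos.mpr hc), Measure.restrict_smul,
    lintegral_smul_measure, smul_eq_mul, hpre]

theorem kernelIntegral_comp_mul_left {h : ℝ → ℝ} (hh : Measurable h) (p : ℝ) {c : ℝ}
    (hc : 0 < c) :
    kernelIntegral p (fun t => h (c * t)) = ENNReal.ofReal (c ^ p) * kernelIntegral p h := by
  have hscale : ∀ t ∈ Ioi (0 : ℝ), ENNReal.ofReal (h (c * t) / t ^ (1 + p)) =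
      ENNReal.ofReal (c ^ (1 + p)) * ENNReal.ofReal (h (c * t) / (c * t) ^ (1 + p)) := by
    intro t ht
    rw [← ENNReal.ofReal_mul (by positivity), Real.mul_rpow hc.le (le_of_lt ht)]
    congr 1
    field_simp
  have hmeas : Measurable fun t => ENNReal.ofReal (h t / t ^ (1 + p)) := by fun_prop
  rw [kernelIntegral, setLIntegral_congr_fun measurableSet_Ioi hscale,
    lintegral_const_mul' _ _ ENNReal.ofReal_ne_top,
    lintegral_Ioi_comp_mul_left hmeas hc, ← mul_assoc, ← ENNReal.ofReal_mul (by positivity),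
    Real.rpow_add hc, Real.rpow_one, kernelIntegral]
  congr 3
  field_simp

theorem kernelIntegral_lt_top {p a C : ℝ} {h : ℝ → ℝ} (hp : 0 < p) (hpa : p < a)
    (h_zero : ∀ t ∈ Ioc (0 : ℝ) 1, h t ≤ C * t ^ a) (h_infty : ∀ t ∈ Ioi (1 : ℝ), h t ≤ C) :
    kernelIntegral p h < ⊤ := by
  have hbound : ∀ {s : Set ℝ} {g : ℝ → ℝ}, MeasurableSet s → IntegrableOn g s →
      (∀ t ∈ s, h t / t ^ (1 + p) ≤ g t) →
      ∫⁻ t in s, ENNReal.ofReal (h t / t ^ (1 + p)) < ⊤ := fun hs hg hhg =>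
    (setLIntegral_mono' hs fun t ht => ENNReal.ofReal_le_ofReal (hhg t ht)).trans_lt
      hg.lintegral_lt_top
  have h_Ioc : ∫⁻ t in Ioc 0 1, ENNReal.ofReal (h t / t ^ (1 + p)) < ⊤ := by
    refine hbound measurableSet_Ioc (g := fun t => C * t ^ (a - (1 + p))) ?_ fun t ht => ?_
    · have := intervalIntegral.intervalIntegrable_rpow' (a := 0) (b := 1)
        (r := a - (1 + p)) (by linarith)
      rw [intervalIntegrable_iff_integrableOn_Ioc_of_le zero_le_one] at this
      exact this.const_mul C
    · rw [Real.rpow_sub ht.1, ← mul_div_assoc]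
      exact div_le_div_of_nonneg_right (h_zero t ht) (by positivity [ht.1])
  have h_Ioi : ∫⁻ t in Ioi 1, ENNReal.ofReal (h t / t ^ (1 + p)) < ⊤ := by
    refine hbound measurableSet_Ioi (g := fun t => C * t ^ (-(1 + p)))
      ((integrableOn_Ioi_rpow_of_lt (by linarith) one_pos).const_mul C) fun t ht => ?_
    have ht0 : (0 : ℝ) < t := one_pos.trans ht
    rw [Real.rpow_neg ht0.le, ← div_eq_mul_inv]
    exact div_le_div_of_nonneg_right (h_infty t ht) (by positivity)
  rw [kernelIntegral, ← Ioc_union_Ioi_eq_Ioi zero_le_one,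
    lintegral_union measurableSet_Ioi Ioc_disjoint_Ioi_same]
  exact ENNReal.add_lt_top.mpr ⟨h_Ioc, h_Ioi⟩

theorem kernelIntegral_pos {p ε : ℝ} {h : ℝ → ℝ} (hh : Measurable h) (hε : 0 < ε)
    (hpos : ∀ t ∈ Ioo 0 ε, 0 < h t) : 0 < kernelIntegral p h := by
  have hmeas : Measurable fun t => ENNReal.ofReal (h t / t ^ (1 + p)) := by fun_prop
  rw [kernelIntegral, setLIntegral_pos_iff hmeas]
  have hsupp :
      Ioo 0 ε ⊆ Function.support (fun t => ENNReal.ofReal (h t / t ^ (1 + p))) ∩ Ioi 0 :=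
    fun t ht => ⟨by simpa using div_pos (hpos t ht) (Real.rpow_pos_of_pos ht.1 (1 + p)), ht.1⟩
  exact (measure_mono hsupp).trans_lt' (by simpa using hε)

theorem kernelIntegral_one_sub_cos_mul {p : ℝ} (hp : p ≠ 0) (a : ℝ) :
    kernelIntegral p (fun t => 1 - Real.cos (a * t)) =
      ENNReal.ofReal (|a| ^ p) * kernelIntegral p (fun t => 1 - Real.cos t) := by
  rcases eq_or_ne a 0 with rfl | ha
  · simp [kernelIntegral, Real.zero_rpow hp]
  · have hcos : ∀ t, Real.cos (|a| * t) = Real.cos (a * t) := fun t => by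
      rw [← Real.cos_abs, abs_mul, abs_abs, ← abs_mul, Real.cos_abs]
    simpa only [hcos] using kernelIntegral_comp_mul_left (h := fun t => 1 - Real.cos t)
      (by fun_prop) p (abs_pos.mpr ha)

theorem kernelIntegral_one_sub_exp_mul_rpow {p q A : ℝ} (hp : p ≠ 0) (hq : 0 < q) (hA : 0 ≤ A) :
    kernelIntegral p (fun t => 1 - Real.exp (-(A * t ^ q))) =
      ENNReal.ofReal (A ^ (p / q)) * kernelIntegral p (fun t => 1 - Real.exp (-t ^ q)) := by
  rcases hA.eq_or_lt with rfl | hA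
  · simp [kernelIntegral, Real.zero_rpow (div_ne_zero hp hq.ne')]
  · set c := A ^ q⁻¹
    have hc : 0 < c := by positivity
    have hscale : ∀ t ∈ Ioi (0 : ℝ), (c * t) ^ q = A * t ^ q := fun t ht => by
      rw [Real.mul_rpow hc.le (le_of_lt ht), ← Real.rpow_mul hA.le, inv_mul_cancel₀ hq.ne',
        Real.rpow_one]
    have h := kernelIntegral_comp_mul_left (h := fun t => 1 - Real.exp (-t ^ q))
      (by fun_prop) p hc
    rw [← Real.rpow_mul hA.le, inv_mul_eq_div] at h
    rw [← h, kernelIntegral, kernelIntegral]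
    refine setLIntegral_congr_fun measurableSet_Ioi fun t ht => ?_
    rw [hscale t ht]

theorem lintegral_rpow_abs_mul_kernelIntegral_one_sub_cos {Ω : Type*} [MeasurableSpace Ω]
    {μ : Measure Ω} [IsProbabilityMeasure μ] {Y : Ω → ℝ} (hY : Measurable Y) {p : ℝ}
    (hp : p ≠ 0) :
    (∫⁻ ω, ENNReal.ofReal (|Y ω| ^ p) ∂μ) * kernelIntegral p (fun t => 1 - Real.cos t) =
      kernelIntegral p (fun t => 1 - ∫ ω, Real.cos (Y ω * t) ∂μ) := by
  have hF : Measurable fun z : Ω × ℝ =>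
      ENNReal.ofReal ((1 - Real.cos (Y z.1 * z.2)) / z.2 ^ (1 + p)) := by fun_prop
  have hinner : ∀ t ∈ Ioi (0 : ℝ),
      ∫⁻ ω, ENNReal.ofReal ((1 - Real.cos (Y ω * t)) / t ^ (1 + p)) ∂μ =
        ENNReal.ofReal ((1 - ∫ ω, Real.cos (Y ω * t) ∂μ) / t ^ (1 + p)) := fun t ht => by
    have hcos : Integrable (fun ω => Real.cos (Y ω * t)) μ :=
      Integrable.of_bound (by fun_prop) 1 (Filter.Eventually.of_forall fun ω => by
        simpa using Real.abs_cos_le_one (Y ω * t))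
    have hint : Integrable (fun ω => (1 - Real.cos (Y ω * t)) / t ^ (1 + p)) μ :=
      ((integrable_const 1).sub hcos).div_const _
    have hnonneg : ∀ ω, 0 ≤ (1 - Real.cos (Y ω * t)) / t ^ (1 + p) := fun ω =>
      div_nonneg (sub_nonneg.mpr (Real.cos_le_one _)) (Real.rpow_nonneg (le_of_lt ht) _)
    rw [← ofReal_integral_eq_lintegral_ofReal hint (Filter.Eventually.of_forall hnonneg),
      integral_div, integral_sub (integrable_const 1) hcos, integral_const, probReal_univ,
      one_smul]
  calc (∫⁻ ω, ENNReal.ofReal (|Y ω| ^ p) ∂μ) * kernelIntegral p (fun t => 1 - Real.cos t)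
      = ∫⁻ ω, kernelIntegral p (fun t => 1 - Real.cos (Y ω * t)) ∂μ := by
        rw [← lintegral_mul_const _ (by fun_prop)]
        simp_rw [kernelIntegral_one_sub_cos_mul hp]
    _ = kernelIntegral p (fun t => 1 - ∫ ω, Real.cos (Y ω * t) ∂μ) := by
        simp only [kernelIntegral]
        rw [lintegral_lintegral_swap hF.aemeasurable]
        exact setLIntegral_congr_fun measurableSet_Ioi hinner

theorem kernelIntegral_one_sub_cos_pos (p : ℝ) :
    0 < kernelIntegral p (fun t => 1 - Real.cos t) :=
  kernelIntegral_pos (by fun_prop) Real.pi_pos fun t ht => sub_pos.mpr <| by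
    simpa using Real.cos_lt_cos_of_nonneg_of_le_pi le_rfl ht.2.le ht.1

theorem kernelIntegral_one_sub_cos_lt_top {p : ℝ} (hp : 0 < p) (hp2 : p < 2) :
    kernelIntegral p (fun t => 1 - Real.cos t) < ⊤ :=
  kernelIntegral_lt_top (C := 2) hp hp2
    (fun t _ => by
      rw [Real.rpow_two]
      nlinarith [Real.one_sub_sq_div_two_le_cos (x := t), sq_nonneg t])
    (fun t _ => by linarith [Real.neg_one_le_cos t])

theorem kernelIntegral_one_sub_exp_rpow_pos (p q : ℝ) :
    0 < kernelIntegral p (fun t => 1 - Real.exp (-t ^ q)) :=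
  kernelIntegral_pos (by fun_prop) one_pos fun t ht => by
    simpa using Real.rpow_pos_of_pos ht.1 q

theorem kernelIntegral_one_sub_exp_rpow_lt_top {p q : ℝ} (hp : 0 < p) (hpq : p < q) :
    kernelIntegral p (fun t => 1 - Real.exp (-t ^ q)) < ⊤ :=
  kernelIntegral_lt_top (C := 1) hp hpq
    (fun t _ => by linarith [Real.add_one_le_exp (-t ^ q)])
    (fun t _ => by linarith [Real.exp_pos (-t ^ q)])

/-- `𝔼|Z|^p` for a standard symmetric `q`-stable random variable `Z`. -/
noncomputable def stableAbsMoment (p q : ℝ) : ℝ≥0∞ :=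
  kernelIntegral p (fun t => 1 - Real.exp (-t ^ q)) / kernelIntegral p (fun t => 1 - Real.cos t)

theorem stableAbsMoment_ne_zero {p : ℝ} (hp : 0 < p) (hp2 : p < 2) (q : ℝ) :
    stableAbsMoment p q ≠ 0 :=
  ENNReal.div_ne_zero.mpr ⟨(kernelIntegral_one_sub_exp_rpow_pos p q).ne',
    (kernelIntegral_one_sub_cos_lt_top hp hp2).ne⟩

theorem stableAbsMoment_ne_top {p q : ℝ} (hp : 0 < p) (hpq : p < q) :
    stableAbsMoment p q ≠ ⊤ :=
  ENNReal.div_ne_top (kernelIntegral_one_sub_exp_rpow_lt_top hp hpq).ne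
    (kernelIntegral_one_sub_cos_pos p).ne'

theorem integral_cos_eq_re_integral_cexp {Ω : Type*} [MeasurableSpace Ω] {μ : Measure Ω}
    [IsFiniteMeasure μ] {Y : Ω → ℝ} (hY : Measurable Y) :
    ∫ ω, Real.cos (Y ω) ∂μ = (∫ ω, cexp (I * (Y ω : ℂ)) ∂μ).re := by
  have hint : Integrable (fun ω => cexp (I * (Y ω : ℂ))) μ :=
    Integrable.of_bound (by fun_prop) 1 (Filter.Eventually.of_forall fun ω => by
      rw [mul_comm, Complex.norm_exp_ofReal_mul_I])
  rw [← RCLike.re_to_complex, ← integral_re hint]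
  simp only [RCLike.re_to_complex, mul_comm I, Complex.exp_ofReal_mul_I_re]

section StableMoments

variable {Ω : Type*} [MeasurableSpace Ω] {μ : Measure Ω} [IsProbabilityMeasure μ] {Y : Ω → ℝ}
  {p q A : ℝ}

theorem lintegral_rpow_abs_of_stable (hY : Measurable Y) (hp : 0 < p) (hp2 : p < 2)
    (hq : 0 < q) (hA : 0 ≤ A)
    (hY_char : ∀ s, 0 < s →
      ∫ ω, cexp (I * ((Y ω * s : ℝ) : ℂ)) ∂μ = cexp (-((A * s ^ q : ℝ) : ℂ))) :
    ∫⁻ ω, ENNReal.ofReal (|Y ω| ^ p) ∂μ = ENNReal.ofReal (A ^ (p / q)) * stableAbsMoment p q := by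
  have hcos : ∀ s ∈ Ioi (0 : ℝ), ∫ ω, Real.cos (Y ω * s) ∂μ = Real.exp (-(A * s ^ q)) :=
    fun s hs => by
      rw [integral_cos_eq_re_integral_cexp (by fun_prop), hY_char s hs, ← Complex.ofReal_neg,
        ← Complex.ofReal_exp, Complex.ofReal_re]
  rw [stableAbsMoment, ← mul_div_assoc, ENNReal.eq_div_iff (kernelIntegral_one_sub_cos_pos p).ne'
    (kernelIntegral_one_sub_cos_lt_top hp hp2).ne, mul_comm,
    lintegral_rpow_abs_mul_kernelIntegral_one_sub_cos hY hp.ne',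
    ← kernelIntegral_one_sub_exp_mul_rpow hp.ne' hq hA, kernelIntegral,
    kernelIntegral]
  exact setLIntegral_congr_fun measurableSet_Ioi fun s hs => by rw [hcos s hs]

theorem integrable_rpow_abs_of_stable (hY : Measurable Y) (hp : 0 < p) (hpq : p < q)
    (hp2 : p < 2) (hA : 0 ≤ A)
    (hY_char : ∀ s, 0 < s →
      ∫ ω, cexp (I * ((Y ω * s : ℝ) : ℂ)) ∂μ = cexp (-((A * s ^ q : ℝ) : ℂ))) :
    Integrable (fun ω => |Y ω| ^ p) μ := by
  refine ⟨(hY.abs.pow_const p).aestronglyMeasurable, ?_⟩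
  rw [hasFiniteIntegral_iff_ofReal (Filter.Eventually.of_forall fun ω => by positivity),
    lintegral_rpow_abs_of_stable hY hp hp2 (hp.trans hpq) hA hY_char]
  exact ENNReal.mul_lt_top ENNReal.ofReal_lt_top (stableAbsMoment_ne_top hp hpq).lt_top

theorem integral_rpow_abs_of_stable (hY : Measurable Y) (hp : 0 < p) (hp2 : p < 2)
    (hq : 0 < q) (hA : 0 ≤ A)
    (hY_char : ∀ s, 0 < s →
      ∫ ω, cexp (I * ((Y ω * s : ℝ) : ℂ)) ∂μ = cexp (-((A * s ^ q : ℝ) : ℂ))) :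
    ∫ ω, |Y ω| ^ p ∂μ = A ^ (p / q) * (stableAbsMoment p q).toReal := by
  rw [integral_eq_lintegral_of_nonneg_ae (Filter.Eventually.of_forall fun ω => by positivity)
    (hY.abs.pow_const p).aestronglyMeasurable, lintegral_rpow_abs_of_stable hY hp hp2 hq hA hY_char,
    ENNReal.toReal_mul, ENNReal.toReal_ofReal (by positivity)]

end StableMoments

theorem integral_cexp_inner_smul_of_stable {n : ℕ} {q : ℝ}
    {μ : Measure (EuclideanSpace ℝ (Fin n))}
    (hμ : ∀ t : EuclideanSpace ℝ (Fin n),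
      ∫ x, cexp (I * ((∑ i, x i * t i : ℝ) : ℂ)) ∂μ = cexp (-((∑ i, |t i| ^ q : ℝ) : ℂ)))
    (x : EuclideanSpace ℝ (Fin n)) {s : ℝ} (hs : 0 ≤ s) :
    ∫ ξ, cexp (I * (((∑ i, x i * ξ i) * s : ℝ) : ℂ)) ∂μ =
      cexp (-(((∑ i, |x i| ^ q) * s ^ q : ℝ) : ℂ)) := by
  have hinner : ∀ ξ : EuclideanSpace ℝ (Fin n), ∑ i, ξ i * (s • x) i = (∑ i, x i * ξ i) * s :=
    fun ξ => by
      simp only [PiLp.smul_apply, smul_eq_mul, Finset.sum_mul]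
      exact Finset.sum_congr rfl fun i _ => by ring
  have hnorm : ∑ i, |(s • x) i| ^ q = (∑ i, |x i| ^ q) * s ^ q := by
    simp only [PiLp.smul_apply, smul_eq_mul, abs_mul, abs_of_nonneg hs,
      Real.mul_rpow hs (abs_nonneg _), ← Finset.mul_sum, mul_comm]
  simpa only [hinner, hnorm] using hμ (s • x)

theorem lq_norm_stable_levy_p_representation_general
    (p q : ℝ) (n : ℕ) (hpq : 1 ≤ p) (hq : p < q) (hq2 : q < 2)
    (μ : Measure (EuclideanSpace ℝ (Fin n))) [IsProbabilityMeasure μ]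
    (hμ : ∀ t : EuclideanSpace ℝ (Fin n),
      ∫ x, Complex.exp (Complex.I * ((∑ i, x i * t i : ℝ) : ℂ)) ∂μ =
        Complex.exp (-((∑ i, |t i| ^ q : ℝ) : ℂ)))
    (ν : Measure ℝ) [IsProbabilityMeasure ν]
    (hν : ∀ t : ℝ,
      ∫ x, Complex.exp (Complex.I * ((x * t : ℝ) : ℂ)) ∂ν =
        Complex.exp (-((|t| ^ q : ℝ) : ℂ))) :
    Integrable (fun t : ℝ => |t| ^ p) ν ∧
    ∃ c : ℝ, 0 < c ∧ c⁻¹ = ∫ t, |t| ^ p ∂ν ∧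
      ∀ x : EuclideanSpace ℝ (Fin n),
        ((∑ i, |x i| ^ q) ^ (1 / q)) ^ p =
          c * ∫ ξ, |∑ i, x i * ξ i| ^ p ∂μ := by
  have hp : 0 < p := by linarith
  have hp2 : p < 2 := hq.trans hq2
  have hν_char : ∀ s, 0 < s →
      ∫ t, cexp (I * ((t * s : ℝ) : ℂ)) ∂ν = cexp (-((1 * s ^ q : ℝ) : ℂ)) := fun s hs => by
    rw [hν s, abs_of_pos hs, one_mul]
  have hm : 0 < (stableAbsMoment p q).toReal :=
    ENNReal.toReal_pos (stableAbsMoment_ne_zero hp hp2 q) (stableAbsMoment_ne_top hp hq)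
  refine ⟨integrable_rpow_abs_of_stable (Y := fun t => t) measurable_id hp hq hp2 zero_le_one
    hν_char, (stableAbsMoment p q).toReal⁻¹, inv_pos.mpr hm, ?_, fun x => ?_⟩
  · rw [inv_inv, integral_rpow_abs_of_stable (Y := fun t => t) measurable_id hp hp2
      (hp.trans hq) zero_le_one hν_char, Real.one_rpow, one_mul]
  · have hx := integral_rpow_abs_of_stable (μ := μ) (by fun_prop) hp hp2 (hp.trans hq)
      (by positivity) fun s hs => integral_cexp_inner_smul_of_stable hμ x hs.le
    rw [hx, mul_comm _ (stableAbsMoment p q).toReal, inv_mul_cancel_left₀ hm.ne',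
      ← Real.rpow_mul (by positivity), one_div_mul_eq_div]

/-- For `1 ≤ p < q < 2` and `n ≥ 2`, the norm of `ℓ_q^n` admits the integral
representation `‖x‖_q^p = c ∫ |⟨x,ξ⟩|^p dμ_q(ξ)` where `μ_q` is the standard symmetric
`q`-stable measure on `ℝⁿ` (characteristic function `exp(-‖t‖_q^q)`), `ν_q` its
one-dimensional analogue, and `c⁻¹ = ∫ |t|^p dν_q(t) < ∞`. -/
theorem lq_norm_stable_levy_p_representation
    (p q : ℝ) (n : ℕ) (hpq : 1 ≤ p) (hq : p < q) (hq2 : q < 2) (hn : 2 ≤ n)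
    (μ : Measure (EuclideanSpace ℝ (Fin n))) [IsProbabilityMeasure μ]
    (hμ : ∀ t : EuclideanSpace ℝ (Fin n),
      ∫ x, Complex.exp (Complex.I * ((∑ i, x i * t i : ℝ) : ℂ)) ∂μ =
        Complex.exp (-((∑ i, |t i| ^ q : ℝ) : ℂ)))
    (ν : Measure ℝ) [IsProbabilityMeasure ν]
    (hν : ∀ t : ℝ,
      ∫ x, Complex.exp (Complex.I * ((x * t : ℝ) : ℂ)) ∂ν =
        Complex.exp (-((|t| ^ q : ℝ) : ℂ))) :
    Integrable (fun t : ℝ => |t| ^ p) ν ∧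
    ∃ c : ℝ, 0 < c ∧ c⁻¹ = ∫ t, |t| ^ p ∂ν ∧
      ∀ x : EuclideanSpace ℝ (Fin n),
        ((∑ i, |x i| ^ q) ^ (1 / q)) ^ p =
          c * ∫ ξ, |∑ i, x i * ξ i| ^ p ∂μ :=
  lq_norm_stable_levy_p_representation_general p q n hpq hq hq2 μ hμ ν hν
end

section
/- Assume n ≥ 2, p ≥ 1, q ≥ 1, q ≠ 2, and p ≠ q. Then ℓ_q^n does not embed linearly isometrically into ℓ_p. -/
/-!
Restricting an embedding to two coordinate vectors gives `A, B ∈ ℓ_p` with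
`‖s A + t B‖_p^p = (|s|^q + |t|^q)^(p/q)`. Compare the second differences
`f (x + h) + f (x - h) - 2 f x` of both sides of `‖A + t B‖_p^p = (1 + |t|^q)^(p/q)`, the left
one coordinate by coordinate.

If `A` and `B` have disjoint supports, `s = t = 1` gives `2 = 2^(p/q)`, so `p = q`. Otherwise
`A j * B j ≠ 0` for some `j`. At the point `x ≠ 0` where `A j + x B j = 0` the right side is
smooth, so its second difference is `O(h^2)`, while coordinate `j` alone contributes
`2 |h B j|^p`: hence `p ≥ 2`. For `p ≥ 2` the second differences of `|·|^p` at `a` are of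
order `|a|^(p-2) h^2` (up to an `|h|^p` error), so at `x = 0` the left side is of exact order
`h^2`, whereas the right side is of exact order `|h|^q`. Hence `q = 2`.
-/

open Asymptotics Filter Real Set Topology

def secondDiff (f : ℝ → ℝ) (x h : ℝ) : ℝ := f (x + h) + f (x - h) - 2 * f x

theorem secondDiff_comp_affine (f : ℝ → ℝ) (a b x h : ℝ) :
    secondDiff (fun t => f (a + t * b)) x h = secondDiff f (a + x * b) (h * b) := by
  simp only [secondDiff]; ring_nf

theorem HasSum.secondDiff {ι : Type*} {F : ι → ℝ → ℝ} {G : ℝ → ℝ}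
    (hF : ∀ t, HasSum (fun i => F i t) (G t)) (x h : ℝ) :
    HasSum (fun i => secondDiff (F i) x h) (secondDiff G x h) :=
  ((hF _).add (hF _)).sub ((hF x).mul_left 2)

theorem ConvexOn.secondDiff_nonneg {f : ℝ → ℝ} (hf : ConvexOn ℝ univ f) (x h : ℝ) :
    0 ≤ secondDiff f x h := by
  have := hf.2 (mem_univ (x + h)) (mem_univ (x - h)) (by norm_num : (0 : ℝ) ≤ 1 / 2)
    (by norm_num : (0 : ℝ) ≤ 1 / 2) (by norm_num)
  simp only [smul_eq_mul] at this
  rw [show 1 / 2 * (x + h) + 1 / 2 * (x - h) = x by ring] at this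
  simp only [secondDiff]; linarith

theorem ContDiffAt.secondDiff_isBigO {f : ℝ → ℝ} {x : ℝ} (hf : ContDiffAt ℝ 2 f x) :
    secondDiff f x =O[𝓝 0] fun h => h ^ 2 := by
  -- `s ↦ f (x + s) + f (x - s)` has derivative `f' (x + s) - f' (x - s) = O(s)`, as `f'` is
  -- Lipschitz near `x`; the mean value theorem on `[0, h]` then gives `O(h ^ 2)`.
  obtain ⟨K, t, ht, hK⟩ := (hf.derivWithin (m := 1) le_rfl).exists_lipschitzOnWith
  have hdiff : ∀ᶠ y in 𝓝 x, HasDerivAt f (deriv f y) y :=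
    (hf.eventually (by simp)).mono fun y hy =>
      (hy.differentiableAt (by norm_num)).hasDerivAt
  obtain ⟨δ, hδ, hball⟩ := Metric.mem_nhds_iff.1 (inter_mem hdiff ht)
  refine IsBigO.of_bound (2 * K) ?_
  filter_upwards [Metric.ball_mem_nhds (0 : ℝ) hδ] with h hh
  rw [Metric.mem_ball, dist_zero_right, Real.norm_eq_abs] at hh
  have hnear : ∀ s ∈ uIcc 0 h, ∀ σ ∈ ({s, -s} : Set ℝ),
      HasDerivAt f (deriv f (x + σ)) (x + σ) ∧ x + σ ∈ t := by
    intro s hs σ hσ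
    have hs' : |s| ≤ |h| := by simpa using abs_sub_left_of_mem_uIcc hs
    apply hball
    rw [Metric.mem_ball, dist_eq_norm, add_sub_cancel_left, Real.norm_eq_abs]
    rcases hσ with rfl | rfl <;> simpa only [abs_neg] using hs'.trans_lt hh
  have hderiv : ∀ s ∈ uIcc 0 h, HasDerivWithinAt (fun s => f (x + s) + f (x - s))
      (deriv f (x + s) - deriv f (x - s)) (uIcc 0 h) s := by
    intro s hs
    have h₁ := (hnear s hs s (by simp)).1.comp s ((hasDerivAt_id s).const_add x)
    have h₂ := (hnear s hs (-s) (by simp)).1.comp s ((hasDerivAt_id s).const_sub x)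
    simp only [← sub_eq_add_neg] at h₂
    exact (h₁.add h₂).hasDerivWithinAt.congr_deriv (by simp; ring)
  have hbound : ∀ s ∈ uIcc 0 h, ‖deriv f (x + s) - deriv f (x - s)‖ ≤ 2 * K * |h| := by
    intro s hs
    have hs' : |s| ≤ |h| := by simpa using abs_sub_left_of_mem_uIcc hs
    have := hK.dist_le_mul _ (hnear s hs s (by simp)).2 _ (hnear s hs (-s) (by simp)).2
    rw [dist_eq_norm, Real.dist_eq, ← sub_eq_add_neg, show x + s - (x - s) = 2 * s by ring,
      abs_mul, abs_two] at this
    nlinarith [K.2]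
  have := Convex.norm_image_sub_le_of_norm_hasDerivWithin_le hderiv hbound (convex_uIcc 0 h)
    left_mem_uIcc right_mem_uIcc
  simp only [add_zero, sub_zero, Real.norm_eq_abs] at this
  rw [secondDiff, Real.norm_eq_abs, Real.norm_eq_abs, abs_pow, sq_abs, two_mul (f x)]
  rwa [mul_assoc _ |h|, abs_mul_abs_self, ← sq] at this

theorem not_isBigO_abs_rpow_of_lt {a b : ℝ} (hab : a < b) :
    ¬ (fun h : ℝ => |h| ^ a) =O[𝓝 0] fun h => |h| ^ b := by
  intro hO
  obtain ⟨C, hC⟩ := hO.bound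
  have hsmall : ∀ᶠ h : ℝ in 𝓝 0, C * |h| ^ (b - a) < 1 := by
    have : Tendsto (fun h : ℝ => C * |h| ^ (b - a)) (𝓝 0) (𝓝 (C * |0| ^ (b - a))) :=
      ((continuous_abs.tendsto 0).rpow_const (Or.inr (sub_pos.2 hab).le)).const_mul C
    rw [abs_zero, zero_rpow (sub_pos.2 hab).ne', mul_zero] at this
    exact this.eventually (gt_mem_nhds one_pos)
  obtain ⟨h, ⟨hbound, hlt⟩, hh⟩ := (((hC.and hsmall).filter_mono nhdsWithin_le_nhds).and
    (eventually_mem_nhdsWithin (a := (0 : ℝ)) (s := {0}ᶜ))).exists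
  have habs : 0 < |h| := abs_pos.2 hh
  rw [Real.norm_of_nonneg (rpow_nonneg (abs_nonneg h) _),
    Real.norm_of_nonneg (rpow_nonneg (abs_nonneg h) _),
    show b = (b - a) + a by ring, rpow_add habs, ← mul_assoc] at hbound
  nlinarith [rpow_pos_of_pos habs a]

theorem isBigO_of_const_mul_le {α : Type*} {l : Filter α} {f g : α → ℝ} {c : ℝ}
    (hc : 0 < c) (hf : 0 ≤ f) (h : ∀ x, c * f x ≤ g x) : f =O[l] g :=
  isBigO_of_le' (c := c⁻¹) l fun x => by
    rw [Real.norm_of_nonneg (hf x), le_inv_mul_iff₀ hc]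
    exact (h x).trans (le_abs_self _)

theorem convexOn_abs_rpow {p : ℝ} (hp : 1 ≤ p) : ConvexOn ℝ univ fun t : ℝ => |t| ^ p := by
  have himage : (norm : ℝ → ℝ) '' univ = Ici 0 := by
    ext y
    exact ⟨fun ⟨x, _, hx⟩ => hx ▸ norm_nonneg x,
      fun hy => ⟨y, trivial, Real.norm_of_nonneg hy⟩⟩
  have h := ConvexOn.comp (f := (norm : ℝ → ℝ)) (himage ▸ convexOn_rpow hp)
    convexOn_univ_norm (himage ▸ monotoneOn_rpow_Ici_of_exponent_nonneg (zero_le_one.trans hp))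
  simpa only [Function.comp_def, Real.norm_eq_abs] using h

theorem contDiffAt_abs_rpow {p x : ℝ} {n : ℕ∞} (hx : x ≠ 0) :
    ContDiffAt ℝ n (fun t : ℝ => |t| ^ p) x :=
  (contDiffAt_rpow_const_of_ne (abs_ne_zero.2 hx)).comp x (contDiffAt_abs hx)

theorem sq_rpow_half (x p : ℝ) : (x ^ 2) ^ (p / 2) = |x| ^ p := by
  rw [← sq_abs, ← rpow_natCast, ← rpow_mul (abs_nonneg x)]
  congr 1
  ring

theorem mul_abs_rpow_mul_sq_le_secondDiff_abs_rpow {p a : ℝ} (hp : 2 ≤ p) (ha : a ≠ 0)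
    (h : ℝ) :
    p * |a| ^ (p - 2) * h ^ 2 ≤ secondDiff (fun t => |t| ^ p) a h := by
  have hr : 1 ≤ p / 2 := by linarith
  have ha2 : 0 < a ^ 2 := by positivity
  have hmid := (convexOn_rpow hr).2 (mem_Ici.2 (sq_nonneg (a + h))) (mem_Ici.2 (sq_nonneg (a - h)))
    (by norm_num : (0 : ℝ) ≤ 1 / 2) (by norm_num : (0 : ℝ) ≤ 1 / 2) (by norm_num)
  simp only [smul_eq_mul, sq_rpow_half] at hmid
  rw [show 1 / 2 * (a + h) ^ 2 + 1 / 2 * (a - h) ^ 2 = a ^ 2 * (1 + h ^ 2 / a ^ 2) by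
    field_simp; ring] at hmid
  have hbern := one_add_mul_self_le_rpow_one_add
    (by have := div_nonneg (sq_nonneg h) ha2.le; linarith : (-1 : ℝ) ≤ h ^ 2 / a ^ 2) hr
  have hsplit : (a ^ 2) ^ (p / 2) * (1 + p / 2 * (h ^ 2 / a ^ 2))
      = |a| ^ p + p / 2 * |a| ^ (p - 2) * h ^ 2 := by
    rw [sq_rpow_half, ← sq_abs a, rpow_sub (abs_pos.2 ha), rpow_two]
    field_simp
  rw [mul_rpow ha2.le (by positivity)] at hmid
  have := mul_le_mul_of_nonneg_left hbern (rpow_nonneg ha2.le (p / 2))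
  rw [secondDiff]
  nlinarith

theorem secondDiff_abs_rpow_mul (p c x h : ℝ) :
    secondDiff (fun t => |t| ^ p) (c * x) (c * h)
      = |c| ^ p * secondDiff (fun t => |t| ^ p) x h := by
  simp only [secondDiff, ← mul_add, ← mul_sub, abs_mul,
    mul_rpow (abs_nonneg c) (abs_nonneg _)]
  ring

theorem exists_secondDiff_abs_rpow_one_le {p : ℝ} (hp : 0 ≤ p) :
    ∃ C, ∀ w, secondDiff (fun t => |t| ^ p) 1 w ≤ C * (w ^ 2 + |w| ^ p) := by
  obtain ⟨C, hC, hCbound⟩ :=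
    (contDiffAt_abs_rpow (p := p) one_ne_zero).secondDiff_isBigO.exists_pos
  obtain ⟨δ, hδ, hnear⟩ := Metric.eventually_nhds_iff.1 hCbound.bound
  refine ⟨C + 2 * (1 / δ + 1) ^ p, fun w => ?_⟩
  have hw2 := sq_nonneg w
  have hwp := rpow_nonneg (abs_nonneg w) p
  have hδp := rpow_nonneg (by positivity : 0 ≤ 1 / δ + 1) p
  rcases lt_or_ge |w| δ with hw | hw
  · have := (le_abs_self _).trans (hnear (by simpa using hw))
    rw [Real.norm_eq_abs, abs_of_nonneg hw2] at this
    nlinarith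
  · have hfar : ∀ ε : ℝ, |ε| = 1 → |1 + ε * w| ^ p ≤ (1 / δ + 1) ^ p * |w| ^ p := by
      intro ε hε
      rw [← mul_rpow (by positivity) (abs_nonneg w)]
      refine rpow_le_rpow (abs_nonneg _) ?_ hp
      calc |1 + ε * w| ≤ 1 + |w| := by simpa [abs_mul, hε] using abs_add_le 1 (ε * w)
        _ ≤ (1 / δ + 1) * |w| := by
          rw [add_mul, div_mul_eq_mul_div, one_mul]; linarith [(one_le_div hδ).2 hw]
    have h₁ := hfar 1 abs_one
    have h₂ := hfar (-1) (by simp)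
    simp only [one_mul, neg_one_mul, ← sub_eq_add_neg] at h₁ h₂
    simp only [secondDiff, abs_one, one_rpow]
    nlinarith

theorem exists_secondDiff_abs_rpow_le {p : ℝ} (hp : 0 ≤ p) :
    ∃ C, 0 ≤ C ∧
      ∀ a h, secondDiff (fun t => |t| ^ p) a h ≤ C * (|a| ^ (p - 2) * h ^ 2 + |h| ^ p) := by
  obtain ⟨C, hC⟩ := exists_secondDiff_abs_rpow_one_le hp
  refine ⟨max C 2, by positivity, fun a h => ?_⟩
  have hterm₁ : 0 ≤ |a| ^ (p - 2) * h ^ 2 := by positivity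
  have hterm₂ : 0 ≤ |h| ^ p := by positivity
  rcases eq_or_ne a 0 with rfl | ha
  · have : (0 : ℝ) ≤ |0| ^ p := by positivity
    simp only [secondDiff, zero_add, zero_sub, abs_neg]
    nlinarith [le_max_right C 2]
  · have hscale : secondDiff (fun t => |t| ^ p) a h
        = |a| ^ p * secondDiff (fun t => |t| ^ p) 1 (h / a) := by
      rw [← secondDiff_abs_rpow_mul, mul_one, mul_div_cancel₀ h ha]
    have hsplit : |a| ^ p * ((h / a) ^ 2 + |h / a| ^ p) = |a| ^ (p - 2) * h ^ 2 + |h| ^ p := by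
      rw [abs_div, div_rpow (abs_nonneg h) (abs_nonneg a), rpow_sub (abs_pos.2 ha), rpow_two,
        div_pow, sq_abs]
      field_simp
    calc secondDiff (fun t => |t| ^ p) a h
        ≤ |a| ^ p * (C * ((h / a) ^ 2 + |h / a| ^ p)) := by
          rw [hscale]; exact mul_le_mul_of_nonneg_left (hC _) (by positivity)
      _ = C * (|a| ^ (p - 2) * h ^ 2 + |h| ^ p) := by rw [← hsplit]; ring
      _ ≤ max C 2 * (|a| ^ (p - 2) * h ^ 2 + |h| ^ p) := by gcongr; exact le_max_left C 2

theorem abs_rpow_sub_two_mul_sq_le {p : ℝ} (hp : 2 ≤ p) (a b : ℝ) :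
    |a| ^ (p - 2) * b ^ 2 ≤ |a| ^ p + |b| ^ p := by
  have hp' : 0 ≤ p - 2 := by linarith
  rcases le_total |b| |a| with hba | hab
  · have : b ^ 2 ≤ |a| ^ (2 : ℝ) := by rw [rpow_two, ← sq_abs b]; gcongr
    calc |a| ^ (p - 2) * b ^ 2 ≤ |a| ^ (p - 2) * |a| ^ (2 : ℝ) := by gcongr
      _ = |a| ^ p := by rw [← rpow_add' (abs_nonneg a) (by linarith)]; ring_nf
      _ ≤ |a| ^ p + |b| ^ p := by linarith [rpow_nonneg (abs_nonneg b) p]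
  · calc |a| ^ (p - 2) * b ^ 2 ≤ |b| ^ (p - 2) * |b| ^ (2 : ℝ) := by
          rw [rpow_two, sq_abs]; gcongr
      _ = |b| ^ p := by rw [← rpow_add' (abs_nonneg b) (by linarith)]; ring_nf
      _ ≤ |a| ^ p + |b| ^ p := by linarith [rpow_nonneg (abs_nonneg a) p]

theorem contDiffAt_one_add_abs_rpow_rpow {q r x : ℝ} {n : ℕ∞} (hx : x ≠ 0) :
    ContDiffAt ℝ n (fun t : ℝ => (1 + |t| ^ q) ^ r) x :=
  (contDiffAt_const.add (contDiffAt_abs_rpow hx)).rpow_const_of_ne (by positivity)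

theorem secondDiff_one_add_abs_rpow_rpow_zero_isBigO {q : ℝ} (hq : 0 < q) (r : ℝ) :
    secondDiff (fun t : ℝ => (1 + |t| ^ q) ^ r) 0 =O[𝓝 0] fun h => |h| ^ q := by
  have hg : HasDerivAt (fun x : ℝ => (1 + x) ^ r) (1 * r * (1 + 0) ^ (r - 1)) 0 :=
    ((hasDerivAt_id (0 : ℝ)).const_add 1).rpow_const (Or.inl (by norm_num))
  have hk : Tendsto (fun h : ℝ => |h| ^ q) (𝓝 0) (𝓝 0) := by
    simpa [zero_rpow hq.ne'] using (continuous_abs.tendsto 0).rpow_const (Or.inr hq.le)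
  have := ((hg.isBigO_sub.comp_tendsto hk).const_mul_left 2).congr_right (fun h => sub_zero _)
  refine this.congr_left fun h => ?_
  simp [secondDiff, zero_rpow hq.ne']
  ring

theorem two_mul_abs_rpow_le_secondDiff_one_add_abs_rpow_rpow {q r : ℝ} (hq : q ≠ 0)
    (hr : 1 ≤ r) (h : ℝ) :
    2 * |h| ^ q ≤ secondDiff (fun t : ℝ => (1 + |t| ^ q) ^ r) 0 h := by
  have hx : 0 ≤ |h| ^ q := by positivity
  have := one_add_mul_self_le_rpow_one_add (by linarith : (-1 : ℝ) ≤ |h| ^ q) hr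
  simp only [secondDiff, zero_add, zero_sub, abs_neg, abs_zero, zero_rpow hq, add_zero, one_rpow]
  nlinarith

def IsLqIsometricPair {ι : Type*} (p q : ℝ) (A B : ι → ℝ) : Prop :=
  ∀ s t : ℝ, HasSum (fun j => |s * A j + t * B j| ^ p) ((|s| ^ q + |t| ^ q) ^ (p / q))

namespace IsLqIsometricPair

variable {ι : Type*} {p q : ℝ} {A B : ι → ℝ}

theorem hasSum_left (hAB : IsLqIsometricPair p q A B) (hq : q ≠ 0) :
    HasSum (fun j => |A j| ^ p) 1 := by
  simpa [zero_rpow hq] using hAB 1 0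

theorem hasSum_right (hAB : IsLqIsometricPair p q A B) (hq : q ≠ 0) :
    HasSum (fun j => |B j| ^ p) 1 := by
  simpa [zero_rpow hq] using hAB 0 1

theorem hasSum_secondDiff (hAB : IsLqIsometricPair p q A B) (x h : ℝ) :
    HasSum (fun j => secondDiff (fun t => |t| ^ p) (A j + x * B j) (h * B j))
      (secondDiff (fun t => (1 + |t| ^ q) ^ (p / q)) x h) := by
  have hline (t : ℝ) : HasSum (fun j => |A j + t * B j| ^ p) ((1 + |t| ^ q) ^ (p / q)) := by
    simpa using hAB 1 t
  simpa only [secondDiff_comp_affine (fun t => |t| ^ p)] using HasSum.secondDiff hline x h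

theorem eq_of_forall_mul_eq_zero (hAB : IsLqIsometricPair p q A B) (hp : p ≠ 0) (hq : q ≠ 0)
    (h : ∀ j, A j * B j = 0) : p = q := by
  have hsplit : (fun j => |1 * A j + 1 * B j| ^ p) = fun j => |A j| ^ p + |B j| ^ p := by
    funext j
    rcases mul_eq_zero.1 (h j) with hA | hB <;> simp [*, zero_rpow hp]
  have h2 : (2 : ℝ) ^ (p / q) = 2 ^ (1 : ℝ) := by
    have := hAB 1 1
    rw [hsplit] at this
    norm_num at this
    rw [rpow_one, this.unique ((hAB.hasSum_left hq).add (hAB.hasSum_right hq))]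
    norm_num
  rwa [rpow_right_inj (by norm_num) (by norm_num), div_eq_one_iff_eq hq] at h2

theorem two_le_of_mul_ne_zero (hAB : IsLqIsometricPair p q A B) (hp : 1 ≤ p) {j₀ : ι}
    (hj₀ : A j₀ * B j₀ ≠ 0) : 2 ≤ p := by
  obtain ⟨hA, hB⟩ := mul_ne_zero_iff.1 hj₀
  by_contra! hlt
  set x := -(A j₀ / B j₀)
  have hx : x ≠ 0 := neg_ne_zero.2 (div_ne_zero hA hB)
  have hkink : A j₀ + x * B j₀ = 0 := by simp only [x]; field_simp; ring
  have hlower (h : ℝ) :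
      2 * |B j₀| ^ p * |h| ^ p ≤ secondDiff (fun t => (1 + |t| ^ q) ^ (p / q)) x h := by
    refine (le_of_eq ?_).trans (le_hasSum (hAB.hasSum_secondDiff x h) j₀
      fun j _ => (convexOn_abs_rpow hp).secondDiff_nonneg _ _)
    simp only [secondDiff, hkink, zero_add, zero_sub, abs_neg, abs_zero,
      zero_rpow (by linarith : p ≠ 0), abs_mul, mul_rpow (abs_nonneg h) (abs_nonneg (B j₀))]
    ring
  have hupper :=
    (contDiffAt_one_add_abs_rpow_rpow (q := q) (r := p / q) (n := 2) hx).secondDiff_isBigO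
  refine not_isBigO_abs_rpow_of_lt hlt ?_
  simpa only [rpow_two, sq_abs] using
    (isBigO_of_const_mul_le (by positivity) (fun h => by positivity) hlower).trans hupper

theorem le_two_of_mul_ne_zero (hAB : IsLqIsometricPair p q A B) (hp : 2 ≤ p) (hq : 0 < q)
    {j₀ : ι} (hj₀ : A j₀ * B j₀ ≠ 0) : q ≤ 2 := by
  obtain ⟨hA, hB⟩ := mul_ne_zero_iff.1 hj₀
  by_contra! hgt
  have hlower (h : ℝ) : p * |A j₀| ^ (p - 2) * B j₀ ^ 2 * |h| ^ (2 : ℝ)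
      ≤ secondDiff (fun t => (1 + |t| ^ q) ^ (p / q)) 0 h := by
    calc _ = p * |A j₀| ^ (p - 2) * (h * B j₀) ^ 2 := by rw [rpow_two, sq_abs]; ring
      _ ≤ secondDiff (fun t => |t| ^ p) (A j₀ + 0 * B j₀) (h * B j₀) := by
        simpa using mul_abs_rpow_mul_sq_le_secondDiff_abs_rpow hp hA (h * B j₀)
      _ ≤ _ := le_hasSum (hAB.hasSum_secondDiff 0 h) j₀
        fun j _ => (convexOn_abs_rpow (by linarith)).secondDiff_nonneg _ _
  have hupper := secondDiff_one_add_abs_rpow_rpow_zero_isBigO hq (p / q)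
  exact not_isBigO_abs_rpow_of_lt hgt
    ((isBigO_of_const_mul_le (by positivity) (fun h => by positivity) hlower).trans hupper)

theorem two_le_of_two_le (hAB : IsLqIsometricPair p q A B) (hp : 2 ≤ p) (hq : 0 < q) :
    2 ≤ q := by
  by_contra! hlt
  obtain ⟨C, hC, hCbound⟩ := exists_secondDiff_abs_rpow_le (by linarith : 0 ≤ p)
  have hB := hAB.hasSum_right hq.ne'
  have hD : Summable fun j => |A j| ^ (p - 2) * B j ^ 2 :=
    ((hAB.hasSum_left hq.ne').summable.add hB.summable).of_nonneg_of_le (fun j => by positivity)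
      fun j => abs_rpow_sub_two_mul_sq_le hp _ _
  have hupper : secondDiff (fun t => (1 + |t| ^ q) ^ (p / q)) 0 =O[𝓝 0]
      fun h => |h| ^ (2 : ℝ) := by
    refine IsBigO.of_bound (C * (∑' j, |A j| ^ (p - 2) * B j ^ 2 + 1)) ?_
    filter_upwards [Metric.closedBall_mem_nhds (0 : ℝ) one_pos] with h hh
    rw [mem_closedBall_zero_iff, Real.norm_eq_abs] at hh
    have hsd := hAB.hasSum_secondDiff 0 h
    rw [Real.norm_of_nonneg
        (hsd.nonneg fun j => (convexOn_abs_rpow (by linarith)).secondDiff_nonneg _ _),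
      Real.norm_of_nonneg (by positivity), mul_right_comm]
    refine hasSum_le (fun j => ?_) hsd ((hD.hasSum.add hB).mul_left (C * |h| ^ (2 : ℝ)))
    have hhp : |h| ^ p ≤ h ^ 2 := by
      simpa only [rpow_two, sq_abs] using
        rpow_le_rpow_of_exponent_ge' (abs_nonneg h) hh (by norm_num) hp
    calc _ ≤ C * (|A j| ^ (p - 2) * (h * B j) ^ 2 + |h * B j| ^ p) := by
          simpa using hCbound (A j) (h * B j)
      _ ≤ C * (|A j| ^ (p - 2) * (h ^ 2 * B j ^ 2) + h ^ 2 * |B j| ^ p) := by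
          rw [abs_mul, mul_rpow (abs_nonneg h) (abs_nonneg _), mul_pow]
          gcongr
      _ = _ := by rw [rpow_two, sq_abs]; ring
  have hlower (h : ℝ) : 2 * |h| ^ q ≤ secondDiff (fun t => (1 + |t| ^ q) ^ (p / q)) 0 h :=
    two_mul_abs_rpow_le_secondDiff_one_add_abs_rpow_rpow hq.ne'
      ((one_le_div hq).2 (by linarith)) h
  exact not_isBigO_abs_rpow_of_lt hlt
    ((isBigO_of_const_mul_le two_pos (fun h => by positivity) hlower).trans hupper)

theorem eq_or_eq_two (hAB : IsLqIsometricPair p q A B) (hp : 1 ≤ p) (hq : 0 < q) :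
    p = q ∨ q = 2 := by
  by_cases hdisj : ∀ j, A j * B j = 0
  · exact Or.inl (hAB.eq_of_forall_mul_eq_zero (by linarith) hq.ne' hdisj)
  obtain ⟨j₀, hj₀⟩ := not_forall.1 hdisj
  have hp2 := hAB.two_le_of_mul_ne_zero hp hj₀
  exact Or.inr (le_antisymm (hAB.le_two_of_mul_ne_zero hp2 hq hj₀) (hAB.two_le_of_two_le hp2 hq))

end IsLqIsometricPair

theorem sum_abs_rpow_smul_single_add_smul_single {ι : Type*} [Fintype ι] [DecidableEq ι]
    {i₀ i₁ : ι} (hi : i₀ ≠ i₁) {q : ℝ} (hq : q ≠ 0) (s t : ℝ) :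
    ∑ i, |(s • EuclideanSpace.single i₀ 1 + t • EuclideanSpace.single i₁ 1 :
        EuclideanSpace ℝ ι) i| ^ q
      = |s| ^ q + |t| ^ q := by
  rw [Fintype.sum_eq_add i₀ i₁ hi]
  · simp [hi, hi.symm]
  · rintro i ⟨h₀, h₁⟩
    simp [h₀, h₁, zero_rpow hq]

/-- For `n ≥ 2`, `p, q ≥ 1`, `q ≠ 2` and `p ≠ q`, the space `ℓ_q^n` does not
embed linearly isometrically into `ℓ_p`. -/
theorem lqn_not_embeds_lp
    (n : ℕ) (hn : 2 ≤ n) (p q : ℝ) (hp : 1 ≤ p) (hq : 1 ≤ q)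
    (hq2 : q ≠ 2) (hpq : p ≠ q) :
    ¬ ∃ T : (EuclideanSpace ℝ (Fin n)) →ₗ[ℝ] (ℕ → ℝ),
      ∀ x : EuclideanSpace ℝ (Fin n),
        Summable (fun j => |T x j| ^ p) ∧
        ∑' j, |T x j| ^ p = ((∑ i, |x i| ^ q) ^ (1 / q)) ^ p := by
  rintro ⟨T, hT⟩
  have hq0 : 0 < q := by linarith
  let e (i : Fin n) : EuclideanSpace ℝ (Fin n) := EuclideanSpace.single i 1
  have hi : (⟨0, by omega⟩ : Fin n) ≠ ⟨1, by omega⟩ := by simp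
  have hAB : IsLqIsometricPair p q (T (e ⟨0, by omega⟩)) (T (e ⟨1, by omega⟩)) := by
    intro s t
    obtain ⟨hsum, htsum⟩ := hT (s • e ⟨0, by omega⟩ + t • e ⟨1, by omega⟩)
    rw [sum_abs_rpow_smul_single_add_smul_single hi hq0.ne', ← rpow_mul (by positivity),
      one_div_mul_eq_div] at htsum
    have := hsum.hasSum
    rw [htsum] at this
    simpa using this
  rcases hAB.eq_or_eq_two hp hq0 with h | h
  exacts [hpq h, hq2 h]
end

section
/- Assume n ≥ 2 and p ≥ 1 is not an even integer. Then ℓ_2^n does not embed linearly isometrically into ℓ_p. -/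
/-!
Restrict `T` to the plane spanned by two orthonormal vectors `e₀, e₁` and write the `j`-th
coordinate of `T (cos θ • e₀ + sin θ • e₁)` in polar form `r_j cos (θ - α_j)`. The isometry
condition says that `∑ⱼ r_jᵖ |cos (θ - α_j)|ᵖ = 1` for every `θ`. Since `|cos|ᵖ` is `π`-periodic,
its Fourier coefficient at frequency `2m` is `∫_{-π/2}^{π/2} cosᵖ x e^{2imx} dx`, and a two-term
recurrence in the frequency shows that these never vanish unless `p` is an even integer.
Integrating against `e^{2imθ}` then shows that `∑ⱼ r_jᵖ w_jᵐ = 0` for all `m ≥ 1`, where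
`w_j = e^{2iα_j}`. A nonzero discrete measure on the circle cannot have all these moments zero:
`∑ⱼ r_jᵖ ‖∑_{k<N} (w_j / w_i)ᵏ‖² = N ∑ⱼ r_jᵖ`, while the single term `j = i` is `r_iᵖ N²`.
-/

open Real MeasureTheory intervalIntegral
open Complex (I)
open scoped ComplexConjugate

noncomputable def cosRpowIntegral (p b : ℝ) : ℂ :=
  ∫ x in -(π / 2)..π / 2, (cos x ^ p : ℝ) * Complex.exp (b * x * I)

section

variable {p : ℝ}

lemma hasDerivAt_cos_rpow_mul_exp (hp : 0 ≤ p) (b x : ℝ) :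
    HasDerivAt (fun x : ℝ => (cos x ^ (p + 1) : ℝ) * Complex.exp (b * x * I))
      (I / 2 * ((b - (p + 1)) * ((cos x ^ p : ℝ) * Complex.exp ((b - 1 : ℝ) * x * I))
        + (b + (p + 1)) * ((cos x ^ p : ℝ) * Complex.exp ((b + 1 : ℝ) * x * I)))) x := by
  have hpow : HasDerivAt (fun x : ℝ => cos x ^ (p + 1)) (-sin x * (p + 1) * cos x ^ p) x := by
    simpa using (hasDerivAt_cos x).rpow_const (p := p + 1) (Or.inr (by linarith))
  have hexp : HasDerivAt (fun x : ℝ => Complex.exp (b * x * I))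
      (Complex.exp (b * x * I) * (b * I)) x := by
    simpa using ((((hasDerivAt_id x).ofReal_comp).const_mul (b : ℂ)).mul_const I).cexp
  refine (hpow.ofReal_comp.mul hexp).congr_deriv ?_
  have hcos : cos x ^ (p + 1) = cos x ^ p * cos x := by
    rcases eq_or_ne (cos x) 0 with h | h
    · simp [h, zero_rpow (by linarith : p + 1 ≠ 0)]
    · exact rpow_add_one h p
  have hexp_add :
      Complex.exp ((b + 1 : ℝ) * x * I) = Complex.exp (b * x * I) * (cos x + sin x * I) := by
    rw [Complex.ofReal_add, Complex.ofReal_one, add_mul, add_mul, Complex.exp_add, one_mul,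
      Complex.exp_mul_I (x : ℂ), Complex.ofReal_cos, Complex.ofReal_sin]
  have hexp_sub :
      Complex.exp ((b - 1 : ℝ) * x * I) = Complex.exp (b * x * I) * (cos x - sin x * I) := by
    rw [Complex.ofReal_sub, Complex.ofReal_one, sub_mul, sub_mul, sub_eq_add_neg, Complex.exp_add,
      one_mul, ← neg_mul, Complex.exp_mul_I (-(x : ℂ)), Complex.cos_neg, Complex.sin_neg,
      Complex.ofReal_cos, Complex.ofReal_sin, neg_mul, ← sub_eq_add_neg]
  rw [hexp_add, hexp_sub, hcos]
  simp only [Complex.ofReal_mul, Complex.ofReal_neg, Complex.ofReal_add, Complex.ofReal_one]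
  linear_combination -(p + 1) * ↑(cos x ^ p) * ↑(sin x) * Complex.exp (↑b * ↑x * I) * Complex.I_sq

lemma cosRpowIntegral_recurrence (hp : 0 ≤ p) (b : ℝ) :
    (b - (p + 1)) * cosRpowIntegral p (b - 1) + (b + (p + 1)) * cosRpowIntegral p (b + 1) = 0 := by
  have hint : ∀ s : ℝ, IntervalIntegrable
      (fun x : ℝ => ((cos x ^ p : ℝ) : ℂ) * Complex.exp (s * x * I)) volume (-(π / 2)) (π / 2) :=
    fun s =>
    (by fun_prop (disch := simp [hp]) : Continuous _).intervalIntegrable _ _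
  have hFTC := integral_eq_sub_of_hasDerivAt (fun x _ => hasDerivAt_cos_rpow_mul_exp hp b x)
    ((((hint _).const_mul _).add ((hint _).const_mul _)).const_mul _)
  rw [intervalIntegral.integral_const_mul,
    integral_add ((hint _).const_mul _) ((hint _).const_mul _),
    intervalIntegral.integral_const_mul, intervalIntegral.integral_const_mul] at hFTC
  simp only [cos_neg, cos_pi_div_two, zero_rpow (by linarith : p + 1 ≠ 0), Complex.ofReal_zero,
    zero_mul, sub_zero, mul_eq_zero, div_eq_zero_iff, Complex.I_ne_zero, false_or] at hFTC
  simpa [cosRpowIntegral] using hFTC.resolve_left (by norm_num)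

lemma cosRpowIntegral_zero_ne_zero (hp : 0 ≤ p) : cosRpowIntegral p 0 ≠ 0 := by
  have hpos : 0 < ∫ x in -(π / 2)..π / 2, cos x ^ p :=
    intervalIntegral_pos_of_pos_on
      ((by fun_prop (disch := simp [hp]) : Continuous fun x => cos x ^ p).intervalIntegrable _ _)
      (fun x hx => rpow_pos_of_pos (cos_pos_of_mem_Ioo hx) p) (by linarith [pi_pos])
  simpa [cosRpowIntegral, intervalIntegral.integral_ofReal] using hpos.ne'

lemma cosRpowIntegral_two_mul_ne_zero (hp : 0 ≤ p) (hpe : ¬ ∃ k : ℕ, p = 2 * k) (k : ℕ) :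
    cosRpowIntegral p (2 * k) ≠ 0 := by
  induction k with
  | zero => simpa using cosRpowIntegral_zero_ne_zero hp
  | succ k ih =>
    -- at `b = 2k + 1` the coefficient of `cosRpowIntegral p (2k)` is `2k - p`
    have hrec := cosRpowIntegral_recurrence hp (2 * k + 1)
    rw [add_sub_cancel_right, show (2 * k + 1 + 1 : ℝ) = 2 * (k + 1 : ℕ) by push_cast; ring]
      at hrec
    intro h
    rw [h, mul_zero, add_zero, mul_eq_zero] at hrec
    refine hrec.elim (fun hfactor => hpe ⟨k, ?_⟩) ih
    push_cast at hfactor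
    exact_mod_cast (by linear_combination -hfactor : (p : ℂ) = 2 * k)

lemma integral_abs_cos_sub_rpow_mul_exp (α : ℝ) (m : ℕ) :
    ∫ θ in (0)..π, (|cos (θ - α)| ^ p : ℝ) * Complex.exp (2 * m * θ * I)
      = Complex.exp (2 * m * α * I) * cosRpowIntegral p (2 * m) := by
  set f : ℝ → ℂ := fun u => (|cos u| ^ p : ℝ) * Complex.exp (2 * m * u * I)
  have hf : Function.Periodic f π := by
    intro u
    simp only [f, cos_add_pi, abs_neg, Complex.ofReal_add, mul_add, add_mul, Complex.exp_add]
    rw [show 2 * (m : ℂ) * π * I = m * (2 * π * I) by ring, Complex.exp_nat_mul_two_pi_mul_I,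
      mul_one]
  have hshift : ∀ θ : ℝ, ((|cos (θ - α)| ^ p : ℝ) : ℂ) * Complex.exp (2 * m * θ * I)
      = Complex.exp (2 * m * α * I) * f (θ - α) := by
    intro θ
    simp only [f, Complex.ofReal_sub, mul_sub, sub_mul, Complex.exp_sub]
    field_simp [Complex.exp_ne_zero]
  calc ∫ θ in (0)..π, ((|cos (θ - α)| ^ p : ℝ) : ℂ) * Complex.exp (2 * m * θ * I)
      = Complex.exp (2 * m * α * I) * ∫ θ in (0)..π, f (θ - α) := by
        simp_rw [hshift]; exact intervalIntegral.integral_const_mul _ _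
    _ = Complex.exp (2 * m * α * I) * ∫ u in -(π / 2)..π / 2, f u := by
        rw [intervalIntegral.integral_comp_sub_right, zero_sub, sub_eq_neg_add,
          hf.intervalIntegral_add_eq (-α) (-(π / 2)), show -(π / 2) + π = π / 2 by ring]
    _ = Complex.exp (2 * m * α * I) * cosRpowIntegral p (2 * m) := by
        congr 1
        refine integral_congr fun u hu => ?_
        rw [Set.uIcc_of_le (by linarith [pi_pos])] at hu
        simp only [f, abs_of_nonneg (cos_nonneg_of_mem_Icc hu)]
        push_cast
        rfl

end

lemma integral_exp_two_mul_nat_mul_I {m : ℕ} (hm : m ≠ 0) :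
    ∫ θ in (0)..π, Complex.exp (2 * m * θ * I) = 0 := by
  have h : (2 * m * I : ℂ) ≠ 0 := by simp [hm]
  simp_rw [show ∀ θ : ℝ, 2 * (m : ℂ) * θ * I = 2 * m * I * θ from fun θ => by ring]
  rw [integral_exp_mul_complex h, show 2 * (m : ℂ) * I * π = m * (2 * π * I) by ring,
    Complex.exp_nat_mul_two_pi_mul_I]
  simp

lemma norm_ofReal_mul_le_abs {z : ℂ} (hz : ‖z‖ ≤ 1) (a : ℝ) : ‖(a : ℂ) * z‖ ≤ |a| := by
  simpa [norm_mul] using mul_le_of_le_one_right (abs_nonneg a) hz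

section
variable {ι : Type*} {c : ι → ℝ}

lemma summable_ofReal_mul_of_norm_le_one (hcs : Summable c) {f : ι → ℂ} (hf : ∀ j, ‖f j‖ ≤ 1) :
    Summable fun j => (c j : ℂ) * f j :=
  hcs.abs.of_norm_bounded fun j => norm_ofReal_mul_le_abs (hf j) (c j)

lemma integral_tsum_ofReal_mul [Countable ι] (hcs : Summable c) {f : ι → ℝ → ℂ}
    (hf : ∀ j, Continuous (f j)) (hf1 : ∀ j x, ‖f j x‖ ≤ 1) (a b : ℝ) :
    ∫ x in a..b, ∑' j, (c j : ℂ) * f j x = ∑' j, (c j : ℂ) * ∫ x in a..b, f j x := by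
  simp_rw [← intervalIntegral.integral_const_mul]
  refine (hasSum_integral_of_dominated_convergence (fun j _ => |c j|)
    (fun j => ((hf j).const_smul (c j : ℂ)).aestronglyMeasurable)
    (fun j => Filter.Eventually.of_forall fun x _ => norm_ofReal_mul_le_abs (hf1 j x) (c j))
    (Filter.Eventually.of_forall fun _ _ => hcs.abs) intervalIntegrable_const
    (Filter.Eventually.of_forall fun x _ =>
      (summable_ofReal_mul_of_norm_le_one hcs (hf1 · x)).hasSum)).tsum_eq.symm

variable {w : ι → ℂ}

lemma tsum_mul_pow_mul_conj_pow (hw : ∀ j, ‖w j‖ = 1)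
    (h : ∀ m : ℕ, 0 < m → ∑' j, c j * w j ^ m = 0) (k l : ℕ) :
    ∑' j, c j * (w j ^ k * conj (w j) ^ l) = if k = l then ((∑' j, c j : ℝ) : ℂ) else 0 := by
  have hunit : ∀ j, w j * conj (w j) = 1 := fun j => by simp [Complex.mul_conj', hw j]
  have hge : ∀ k l : ℕ, l ≤ k →
      ∑' j, c j * (w j ^ k * conj (w j) ^ l) = ∑' j, c j * w j ^ (k - l) :=
    fun k l hlk => tsum_congr fun j => by
      rw [← Nat.sub_add_cancel hlk, pow_add, mul_assoc, ← mul_pow, hunit, one_pow, mul_one,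
        Nat.add_sub_cancel]
  rcases lt_trichotomy k l with hkl | rfl | hkl
  · -- conjugation swaps `k` and `l`
    rw [if_neg hkl.ne, ← map_eq_zero_iff _ (RingHom.injective (starRingEnd ℂ)), Complex.conj_tsum]
    simp only [map_mul, Complex.conj_ofReal, map_pow, Complex.conj_conj]
    simp_rw [mul_comm (_ ^ k)]
    rw [hge l k hkl.le, h _ (Nat.sub_pos_of_lt hkl)]
  · rw [if_pos rfl, hge k k le_rfl, Nat.sub_self, Complex.ofReal_tsum]
    simp
  · rw [if_neg hkl.ne', hge k l hkl.le, h _ (Nat.sub_pos_of_lt hkl)]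

lemma hasSum_mul_norm_geom_sum_sq (hcs : Summable c) (hw : ∀ j, ‖w j‖ = 1)
    (h : ∀ m : ℕ, 0 < m → ∑' j, c j * w j ^ m = 0) (N : ℕ) :
    HasSum (fun j => c j * ‖∑ k ∈ Finset.range N, w j ^ k‖ ^ 2) (N * ∑' j, c j) := by
  have hterm : ∀ k l : ℕ, HasSum (fun j => (c j : ℂ) * (w j ^ k * conj (w j) ^ l))
      (if k = l then ((∑' j, c j : ℝ) : ℂ) else 0) := fun k l => by
    rw [← tsum_mul_pow_mul_conj_pow hw h k l]
    exact (summable_ofReal_mul_of_norm_le_one hcs fun j => by simp [hw j]).hasSum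
  rw [← Complex.hasSum_ofReal]
  convert hasSum_sum (s := Finset.range N) fun k _ =>
    hasSum_sum (s := Finset.range N) fun l _ => hterm k l using 1
  · funext j
    rw [Complex.ofReal_mul, Complex.ofReal_pow, ← Complex.mul_conj', map_sum, Finset.sum_mul_sum,
      Finset.mul_sum]
    simp_rw [Finset.mul_sum, map_pow]
  · simp only [Finset.sum_ite_eq, Finset.sum_ite_mem, Finset.inter_self, Finset.sum_const,
      Finset.card_range, nsmul_eq_mul]
    push_cast; ring

theorem eq_zero_of_tsum_mul_pow_eq_zero (hc : ∀ j, 0 ≤ c j) (hcs : Summable c)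
    (hw : ∀ j, ‖w j‖ = 1) (h : ∀ m : ℕ, 0 < m → ∑' j, c j * w j ^ m = 0) (j : ι) : c j = 0 := by
  set ζ : ι → ℂ := fun i => w i * conj (w j)
  have hζ : ∀ i, ‖ζ i‖ = 1 := fun i => by simp [ζ, hw]
  have hζj : ζ j = 1 := by simp [ζ, Complex.mul_conj', hw j]
  have hζm : ∀ m : ℕ, 0 < m → ∑' i, c i * ζ i ^ m = 0 := fun m hm => by
    simp_rw [ζ, mul_pow, ← mul_assoc, tsum_mul_right, h m hm, zero_mul]
  have hbound : ∀ N : ℕ, c j * N ^ 2 ≤ N * ∑' i, c i := fun N => by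
    simpa [hζj] using le_hasSum (hasSum_mul_norm_geom_sum_sq hcs hζ hζm N) j
      fun i _ => mul_nonneg (hc i) (sq_nonneg _)
  refine le_antisymm ?_ (hc j)
  by_contra! hpos
  obtain ⟨N, hN⟩ := exists_nat_gt ((∑' i, c i) / c j)
  have hN0 : (0 : ℝ) < N := (div_nonneg (tsum_nonneg hc) (hc j)).trans_lt hN
  rw [div_lt_iff₀ hpos] at hN
  nlinarith [hbound N]

end

lemma one_le_two_rpow_mul_abs_cos_rpow_add_abs_sin_rpow {p : ℝ} (hp : 0 ≤ p) (a : ℝ) :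
    1 ≤ 2 ^ p * (|cos a| ^ p + |sin a| ^ p) := by
  have hsq : |cos a| ^ 2 + |sin a| ^ 2 = 1 := by simp [cos_sq_add_sin_sq]
  have hbound : ∀ t : ℝ, 1 ≤ 2 * |t| → 1 ≤ 2 ^ p * |t| ^ p := fun t ht => by
    rw [← mul_rpow zero_le_two (abs_nonneg t)]
    exact one_le_rpow ht hp
  have hcos := rpow_nonneg (abs_nonneg (cos a)) p
  have hsin := rpow_nonneg (abs_nonneg (sin a)) p
  have h2 := rpow_nonneg zero_le_two p
  by_cases h : 1 ≤ 2 * |cos a|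
  · nlinarith [hbound _ h]
  · have : 1 ≤ 2 * |sin a| := by nlinarith [abs_nonneg (cos a), abs_nonneg (sin a)]
    nlinarith [hbound _ this]

lemma summable_of_summable_mul_abs_cos_rpow_of_summable_mul_abs_sin_rpow {ι : Type*} {p : ℝ}
    (hp : 0 ≤ p) {c α : ι → ℝ} (hc : ∀ j, 0 ≤ c j)
    (hcos : Summable fun j => c j * |cos (α j)| ^ p)
    (hsin : Summable fun j => c j * |sin (α j)| ^ p) :
    Summable c :=
  ((hcos.add hsin).mul_left (2 ^ p)).of_nonneg_of_le hc fun j => by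
    have := mul_le_mul_of_nonneg_left
      (one_le_two_rpow_mul_abs_cos_rpow_add_abs_sin_rpow hp (α j)) (hc j)
    linarith

theorem eq_zero_of_tsum_mul_abs_cos_sub_rpow_eq_const {ι : Type*} [Countable ι] {p : ℝ}
    (hp : 0 ≤ p) (hpe : ¬ ∃ k : ℕ, p = 2 * k) {c α : ι → ℝ} (hc : ∀ j, 0 ≤ c j)
    (hsum : ∀ θ, Summable fun j => c j * |cos (θ - α j)| ^ p) {K : ℝ}
    (hK : ∀ θ, ∑' j, c j * |cos (θ - α j)| ^ p = K) (j : ι) : c j = 0 := by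
  have hcs : Summable c :=
    summable_of_summable_mul_abs_cos_rpow_of_summable_mul_abs_sin_rpow hp hc
      (by simpa using hsum 0) (by simpa [cos_pi_div_two_sub] using hsum (π / 2))
  refine eq_zero_of_tsum_mul_pow_eq_zero hc hcs (w := fun j => Complex.exp (2 * α j * I))
    (fun j => by simpa using Complex.norm_exp_ofReal_mul_I (2 * α j)) (fun m hm => ?_) j
  have hcoeff := integral_tsum_ofReal_mul hcs
    (f := fun j θ => ((|cos (θ - α j)| ^ p : ℝ) : ℂ) * Complex.exp (2 * m * θ * I))
    (fun j => by fun_prop (disch := simp [hp]))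
    (fun j θ => by
      simpa [norm_mul, Complex.norm_exp, abs_of_nonneg (rpow_nonneg (abs_nonneg _) _)] using
        rpow_le_one (abs_nonneg _) (abs_cos_le_one _) hp) 0 π
  have hsum_exp : ∀ θ : ℝ, ∑' j, (c j : ℂ) * (((|cos (θ - α j)| ^ p : ℝ) : ℂ)
      * Complex.exp (2 * m * θ * I)) = K * Complex.exp (2 * m * θ * I) := fun θ => by
    simp_rw [← mul_assoc, ← Complex.ofReal_mul, tsum_mul_right, ← Complex.ofReal_tsum, hK]
  have hexp_pow : ∀ j, (c j : ℂ) * (Complex.exp (2 * m * α j * I) * cosRpowIntegral p (2 * m))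
      = c j * Complex.exp (2 * α j * I) ^ m * cosRpowIntegral p (2 * m) := fun j => by
    rw [← Complex.exp_nat_mul]; ring_nf
  simp_rw [hsum_exp, integral_abs_cos_sub_rpow_mul_exp, hexp_pow,
    intervalIntegral.integral_const_mul, integral_exp_two_mul_nat_mul_I hm.ne', mul_zero,
    tsum_mul_right] at hcoeff
  exact (mul_eq_zero.mp hcoeff.symm).resolve_right (cosRpowIntegral_two_mul_ne_zero hp hpe m)

lemma norm_cos_smul_add_sin_smul {E : Type*} [NormedAddCommGroup E] [InnerProductSpace ℝ E]
    {u v : E} (hu : ‖u‖ = 1) (hv : ‖v‖ = 1) (huv : inner ℝ u v = 0) (θ : ℝ) :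
    ‖cos θ • u + sin θ • v‖ = 1 := by
  have h := norm_add_sq_eq_norm_sq_add_norm_sq_of_inner_eq_zero (cos θ • u) (sin θ • v)
    (by rw [real_inner_smul_left, real_inner_smul_right, huv, mul_zero, mul_zero])
  rw [norm_smul, norm_smul, hu, hv, Real.norm_eq_abs, Real.norm_eq_abs, mul_one, mul_one,
    abs_mul_abs_self, abs_mul_abs_self] at h
  nlinarith [norm_nonneg (cos θ • u + sin θ • v), sin_sq_add_cos_sq θ]

lemma re_mul_cos_add_im_mul_sin (z : ℂ) (θ : ℝ) :
    z.re * cos θ + z.im * sin θ = ‖z‖ * cos (θ - z.arg) := by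
  rw [cos_sub, ← Complex.norm_mul_cos_arg, ← Complex.norm_mul_sin_arg]
  ring

/-- For `n ≥ 2` and `p ≥ 1` not an even integer, `ℓ_2^n` does not embed
linearly isometrically into `ℓ_p`. -/
theorem euclidean_n_not_embeds_lp
    (n : ℕ) (hn : 2 ≤ n) (p : ℝ) (hp : 1 ≤ p) (hpe : ¬ ∃ k : ℕ, p = 2 * k) :
    ¬ ∃ T : (EuclideanSpace ℝ (Fin n)) →ₗ[ℝ] (ℕ → ℝ),
      ∀ x : EuclideanSpace ℝ (Fin n),
        Summable (fun j => |T x j| ^ p) ∧ ∑' j, |T x j| ^ p = ‖x‖ ^ p := by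
  rintro ⟨T, hT⟩
  set e₀ := EuclideanSpace.single (⟨0, by omega⟩ : Fin n) (1 : ℝ)
  set e₁ := EuclideanSpace.single (⟨1, by omega⟩ : Fin n) (1 : ℝ)
  have hnorm : ∀ θ, ‖cos θ • e₀ + sin θ • e₁‖ = 1 :=
    norm_cos_smul_add_sin_smul (by simp [e₀]) (by simp [e₁])
      (by simp [e₀, e₁, EuclideanSpace.inner_single_left])
  set z : ℕ → ℂ := fun j => ⟨T e₀ j, T e₁ j⟩
  have hterm : ∀ θ j, |T (cos θ • e₀ + sin θ • e₁) j| ^ p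
      = ‖z j‖ ^ p * |cos (θ - (z j).arg)| ^ p := fun θ j => by
    have h := re_mul_cos_add_im_mul_sin (z j) θ
    simp only [map_add, map_smul, Pi.add_apply, Pi.smul_apply, smul_eq_mul]
    rw [mul_comm (cos θ), mul_comm (sin θ), show T e₀ j * cos θ + T e₁ j * sin θ = _ from h,
      abs_mul, abs_norm, mul_rpow (norm_nonneg _) (abs_nonneg _)]
  have hzero := eq_zero_of_tsum_mul_abs_cos_sub_rpow_eq_const (by linarith) hpe
    (c := fun j => ‖z j‖ ^ p) (α := fun j => (z j).arg) (fun j => by positivity)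
    (fun θ => (hT _).1.congr (hterm θ)) (K := 1)
    (fun θ => by rw [← tsum_congr (hterm θ), (hT _).2, hnorm, one_rpow])
  have hone := (hT (cos 0 • e₀ + sin 0 • e₁)).2
  rw [hnorm, one_rpow, tsum_congr (hterm 0)] at hone
  simp [hzero] at hone
end
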